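/- arXiv:1012.2061 — 4 statements merged into one kernel-verified Lean document; each statement's English description precedes it below -/
import Mathlib

section
/- For every zero-mean function u in H^{1+ε} of the two-dimensional torus (ε > 0), one has ‖u‖_{C(𝕋²)}² ≤ C(ε)·‖(−Δ)^{(1+ε)/2} u‖_{L²}², where C(ε) = (1/(4π²)) Σ'_{k ∈ ℤ²∖{0}} |k|^{−2(1+ε)}, and this constant is sharp, with equality attained (up to scaling and translation) by the function U_ε(x) = Σ'_{k} e^{i k·x}/|k|^{2(1+ε)}. -/
open Real Complex

noncomputable section

/-- `|k|² = k₁² + k₂²` as a real number, for `k ∈ ℤ²`. -/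
def ksq (k : ℤ × ℤ) : ℝ := (k.1 : ℝ) ^ 2 + (k.2 : ℝ) ^ 2

/-- The sharp constant `C(ε) = (1/(4π²)) Σ'_{k≠0} |k|^{-2(1+ε)}`. -/
def Cconst (ε : ℝ) : ℝ :=
  (1 / (4 * π ^ 2)) * ∑' k : ℤ × ℤ, if k = 0 then 0 else ksq k ^ (-(1 + ε))

/-- The coefficients of the extremal function `U_ε`. -/
def Ucoef (ε : ℝ) (k : ℤ × ℤ) : ℝ := if k = 0 then 0 else ksq k ^ (-(1 + ε))

lemma ksq_pos {k : ℤ × ℤ} (hk : k ≠ 0) : 0 < ksq k := by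
  have h1 : k.1 ≠ 0 ∨ k.2 ≠ 0 := by
    by_contra hc
    push_neg at hc
    exact hk (Prod.ext hc.1 hc.2)
  unfold ksq
  rcases h1 with h | h
  · have : (0:ℝ) < (k.1:ℝ)^2 := by positivity
    nlinarith [sq_nonneg (k.2:ℝ)]
  · have : (0:ℝ) < (k.2:ℝ)^2 := by positivity
    nlinarith [sq_nonneg (k.1:ℝ)]

lemma summable_Ucoef {ε : ℝ} (hε : 0 < ε) : Summable (Ucoef ε) := by
  have h2 : (2:ℝ) < 2 * (1 + ε) := by nlinarith
  have hs := EisensteinSeries.summable_one_div_norm_rpow h2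
  have hs2 : Summable fun p : ℤ × ℤ => ‖(finTwoArrowEquiv ℤ).symm p‖ ^ (-(2 * (1 + ε))) :=
    ((finTwoArrowEquiv ℤ).symm.summable_iff).mpr hs
  refine hs2.of_nonneg_of_le (fun k => ?_) (fun k => ?_)
  · unfold Ucoef
    split
    · exact le_refl 0
    · exact Real.rpow_nonneg (ksq_pos (by assumption)).le _
  · by_cases hk : k = 0
    · simp only [Ucoef, hk, if_pos rfl]
      exact Real.rpow_nonneg (norm_nonneg _) _
    · rw [Ucoef, if_neg hk]
      set x := (finTwoArrowEquiv ℤ).symm k with hx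
      have hx0 : x 0 = k.1 := rfl
      have hx1 : x 1 = k.2 := rfl
      have hxn : x ≠ 0 := by
        intro h
        have h0 := congrFun h 0
        have h1' := congrFun h 1
        rw [hx0] at h0
        rw [hx1] at h1'
        exact hk (Prod.ext h0 h1')
      have hnorm : ‖x‖ = ((max (k.1.natAbs) (k.2.natAbs) : ℕ) : ℝ) := by
        rw [EisensteinSeries.norm_eq_max_natAbs, hx0, hx1]
      have hsq : ‖x‖ ^ 2 ≤ ksq k := by
        rw [hnorm]
        unfold ksq
        rcases max_cases k.1.natAbs k.2.natAbs with ⟨h, _⟩ | ⟨h, _⟩ <;> rw [h]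
        · have : ((k.1.natAbs : ℝ))^2 = (k.1:ℝ)^2 := by
            rw [Nat.cast_natAbs]; push_cast; exact _root_.sq_abs _
          nlinarith [sq_nonneg (k.2:ℝ)]
        · have : ((k.2.natAbs : ℝ))^2 = (k.2:ℝ)^2 := by
            rw [Nat.cast_natAbs]; push_cast; exact _root_.sq_abs _
          nlinarith [sq_nonneg (k.1:ℝ)]
      have hnpos : (0:ℝ) < ‖x‖ := norm_pos_iff.mpr hxn
      have key : ‖x‖ ^ (-(2 * (1 + ε))) = (‖x‖ ^ 2) ^ (-(1 + ε)) := by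
        rw [← Real.rpow_natCast ‖x‖ 2, ← Real.rpow_mul hnpos.le]
        norm_num
        ring_nf
      rw [key]
      exact Real.rpow_le_rpow_of_nonpos (by positivity) hsq (by linarith)


lemma tsum_CS {ι : Type*} (f g : ι → ℝ) (hf0 : ∀ i, 0 ≤ f i) (hg0 : ∀ i, 0 ≤ g i)
    (hf : Summable (fun i => f i ^ 2)) (hg : Summable (fun i => g i ^ 2)) :
    Summable (fun i => f i * g i) ∧
      (∑' i, f i * g i) ^ 2 ≤ (∑' i, f i ^ 2) * (∑' i, g i ^ 2) := by
  have hsum : Summable (fun i => f i * g i) := by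
    refine ((hf.add hg).mul_left (1/2)).of_nonneg_of_le
      (fun i => mul_nonneg (hf0 i) (hg0 i)) (fun i => ?_)
    have := sq_nonneg (f i - g i)
    show f i * g i ≤ 1/2 * (f i ^ 2 + g i ^ 2)
    nlinarith
  refine ⟨hsum, ?_⟩
  have hA : 0 ≤ ∑' i, f i ^ 2 := tsum_nonneg (fun i => sq_nonneg _)
  have hB : 0 ≤ ∑' i, g i ^ 2 := tsum_nonneg (fun i => sq_nonneg _)
  have hle : ∑' i, f i * g i ≤ Real.sqrt ((∑' i, f i ^ 2) * (∑' i, g i ^ 2)) := by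
    refine Summable.tsum_le_of_sum_le hsum (fun s => ?_)
    refine Real.le_sqrt_of_sq_le ?_
    calc (∑ i ∈ s, f i * g i) ^ 2 ≤ (∑ i ∈ s, f i ^ 2) * ∑ i ∈ s, g i ^ 2 :=
          Finset.sum_mul_sq_le_sq_mul_sq s f g
      _ ≤ (∑' i, f i ^ 2) * (∑' i, g i ^ 2) := by
          have h1 := Summable.sum_le_tsum s (fun i _ => sq_nonneg (f i)) hf
          have h2 := Summable.sum_le_tsum s (fun i _ => sq_nonneg (g i)) hg
          have h3 : (0:ℝ) ≤ ∑ i ∈ s, g i ^ 2 := Finset.sum_nonneg fun i _ => sq_nonneg _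
          nlinarith
  calc (∑' i, f i * g i) ^ 2 ≤ Real.sqrt ((∑' i, f i ^ 2) * (∑' i, g i ^ 2)) ^ 2 := by
        gcongr
        exact tsum_nonneg fun i => mul_nonneg (hf0 i) (hg0 i)
    _ = _ := Real.sq_sqrt (mul_nonneg hA hB)

lemma ksq_nonneg (k : ℤ × ℤ) : 0 ≤ ksq k := by unfold ksq; positivity

lemma Ucoef_nonneg (ε : ℝ) (k : ℤ × ℤ) : 0 ≤ Ucoef ε k := by
  unfold Ucoef
  split
  · exact le_refl 0
  · exact Real.rpow_nonneg (ksq_pos (by assumption)).le _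

/-- The sharp embedding `H^{1+ε}(𝕋²) ↪ C(𝕋²)` for zero-mean functions:
`‖u‖_C² ≤ C(ε) ‖(−Δ)^{(1+ε)/2} u‖²_{L²}`, where for `u = Σ' u_k e^{ik·x}` one has
`‖(−Δ)^{(1+ε)/2} u‖²_{L²} = 4π² Σ' |k|^{2(1+ε)} |u_k|²`; and the constant is sharp:
equality is attained by `U_ε(x) = Σ' e^{ik·x}/|k|^{2(1+ε)}` (at its maximum point `x = 0`). -/
theorem sharp_Heps_embedding (ε : ℝ) (hε : 0 < ε) :
    (∀ c : ℤ × ℤ → ℂ, c 0 = 0 →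
      Summable (fun k => ksq k ^ (1 + ε) * ‖c k‖ ^ 2) →
      ∀ x : ℝ × ℝ,
        ‖∑' k : ℤ × ℤ, c k * Complex.exp (Complex.I * ((k.1 : ℂ) * (x.1 : ℂ) + (k.2 : ℂ) * (x.2 : ℂ)))‖ ^ 2
          ≤ Cconst ε * (4 * π ^ 2 * ∑' k : ℤ × ℤ, ksq k ^ (1 + ε) * ‖c k‖ ^ 2)) ∧
    ‖∑' k : ℤ × ℤ, (Ucoef ε k : ℂ) *
        Complex.exp (Complex.I * ((k.1 : ℂ) * ((0 : ℝ) : ℂ) + (k.2 : ℂ) * ((0 : ℝ) : ℂ)))‖ ^ 2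
      = Cconst ε * (4 * π ^ 2 * ∑' k : ℤ × ℤ, ksq k ^ (1 + ε) * ‖(Ucoef ε k : ℂ)‖ ^ 2) := by
  have hwsum : Summable (Ucoef ε) := summable_Ucoef hε
  set S : ℝ := ∑' k : ℤ × ℤ, Ucoef ε k with hSdef
  have hSnn : 0 ≤ S := tsum_nonneg (Ucoef_nonneg ε)
  have hpi : (4 * π ^ 2 : ℝ) ≠ 0 := by positivity
  have hC : Cconst ε = (1 / (4 * π ^ 2)) * S := rfl
  constructor
  · intro c hc0 hcsum x
    have hexp : ∀ k : ℤ × ℤ,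
        ‖Complex.exp (Complex.I * ((k.1 : ℂ) * (x.1 : ℂ) + (k.2 : ℂ) * (x.2 : ℂ)))‖ = 1 := by
      intro k
      have h1 : (Complex.I * ((k.1 : ℂ) * (x.1 : ℂ) + (k.2 : ℂ) * (x.2 : ℂ)))
          = (((k.1 : ℝ) * x.1 + (k.2 : ℝ) * x.2 : ℝ) : ℂ) * Complex.I := by
        push_cast; ring
      rw [h1, Complex.norm_exp_ofReal_mul_I]
    set f : ℤ × ℤ → ℝ := fun k => Real.sqrt (Ucoef ε k) with hfdef
    set g : ℤ × ℤ → ℝ := fun k => Real.sqrt (ksq k ^ (1 + ε)) * ‖c k‖ with hgdef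
    have hf0 : ∀ k, 0 ≤ f k := fun k => Real.sqrt_nonneg _
    have hg0 : ∀ k, 0 ≤ g k := fun k => mul_nonneg (Real.sqrt_nonneg _) (norm_nonneg _)
    have hfsq : ∀ k, f k ^ 2 = Ucoef ε k := fun k => Real.sq_sqrt (Ucoef_nonneg ε k)
    have hgsq : ∀ k, g k ^ 2 = ksq k ^ (1 + ε) * ‖c k‖ ^ 2 := by
      intro k
      rw [hgdef]
      simp only [mul_pow]
      rw [Real.sq_sqrt (Real.rpow_nonneg (ksq_nonneg k) _)]
    have hf2 : Summable (fun k => f k ^ 2) := by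
      simpa only [hfsq] using hwsum
    have hg2 : Summable (fun k => g k ^ 2) := by
      simpa only [hgsq] using hcsum
    have hfg : ∀ k, f k * g k = ‖c k‖ := by
      intro k
      by_cases hk : k = 0
      · subst hk
        simp [hfdef, hgdef, Ucoef, hc0]
      · simp only [hfdef, hgdef, Ucoef, if_neg hk]
        rw [← mul_assoc, ← Real.sqrt_mul (Real.rpow_nonneg (ksq_pos hk).le _),
          ← Real.rpow_add (ksq_pos hk)]
        norm_num
    obtain ⟨hsumfg, hcs⟩ := tsum_CS f g hf0 hg0 hf2 hg2
    have hnorms : Summable (fun k : ℤ × ℤ =>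
        ‖c k * Complex.exp (Complex.I * ((k.1 : ℂ) * (x.1 : ℂ) + (k.2 : ℂ) * (x.2 : ℂ)))‖) := by
      refine hsumfg.congr (fun k => ?_)
      rw [hfg k, norm_mul, hexp k, mul_one]
    have hbound := norm_tsum_le_tsum_norm hnorms
    have htsum_eq : (∑' k : ℤ × ℤ,
        ‖c k * Complex.exp (Complex.I * ((k.1 : ℂ) * (x.1 : ℂ) + (k.2 : ℂ) * (x.2 : ℂ)))‖)
        = ∑' k, f k * g k := by
      refine tsum_congr (fun k => ?_)
      rw [norm_mul, hexp k, mul_one, hfg k]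
    have hfs : (∑' k, f k ^ 2) = S := tsum_congr hfsq
    have hgs : (∑' k, g k ^ 2) = ∑' k : ℤ × ℤ, ksq k ^ (1 + ε) * ‖c k‖ ^ 2 := tsum_congr hgsq
    have hnn2 : 0 ≤ ∑' k, f k * g k := tsum_nonneg fun k => mul_nonneg (hf0 k) (hg0 k)
    calc ‖∑' k : ℤ × ℤ, c k * Complex.exp (Complex.I * ((k.1 : ℂ) * (x.1 : ℂ) + (k.2 : ℂ) * (x.2 : ℂ)))‖ ^ 2
        ≤ (∑' k, f k * g k) ^ 2 := by
          rw [← htsum_eq]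
          exact pow_le_pow_left₀ (norm_nonneg _) hbound 2
      _ ≤ (∑' k, f k ^ 2) * (∑' k, g k ^ 2) := hcs
      _ = S * ∑' k : ℤ × ℤ, ksq k ^ (1 + ε) * ‖c k‖ ^ 2 := by rw [hfs, hgs]
      _ = Cconst ε * (4 * π ^ 2 * ∑' k : ℤ × ℤ, ksq k ^ (1 + ε) * ‖c k‖ ^ 2) := by
          rw [hC]; field_simp
  · have hexp0 : ∀ k : ℤ × ℤ,
        Complex.exp (Complex.I * ((k.1 : ℂ) * ((0 : ℝ) : ℂ) + (k.2 : ℂ) * ((0 : ℝ) : ℂ))) = 1 := by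
      intro k; simp
    have hL : (∑' k : ℤ × ℤ, (Ucoef ε k : ℂ) *
        Complex.exp (Complex.I * ((k.1 : ℂ) * ((0 : ℝ) : ℂ) + (k.2 : ℂ) * ((0 : ℝ) : ℂ))))
        = ((S : ℝ) : ℂ) := by
      rw [show (∑' k : ℤ × ℤ, (Ucoef ε k : ℂ) *
        Complex.exp (Complex.I * ((k.1 : ℂ) * ((0 : ℝ) : ℂ) + (k.2 : ℂ) * ((0 : ℝ) : ℂ))))
        = ∑' k : ℤ × ℤ, ((Ucoef ε k : ℝ) : ℂ) from tsum_congr fun k => by rw [hexp0 k, mul_one]]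
      rw [hSdef, Complex.ofReal_tsum]
    have hR : (∑' k : ℤ × ℤ, ksq k ^ (1 + ε) * ‖(Ucoef ε k : ℂ)‖ ^ 2) = S := by
      refine tsum_congr (fun k => ?_)
      rw [Complex.norm_real, Real.norm_of_nonneg (Ucoef_nonneg ε k)]
      by_cases hk : k = 0
      · subst hk; simp [Ucoef]
      · simp only [Ucoef, if_neg hk]
        rw [sq, ← Real.rpow_add (ksq_pos hk), ← Real.rpow_add (ksq_pos hk)]
        congr 1
        ring
    rw [hL, hR, hC, Complex.norm_real, Real.norm_of_nonneg hSnn]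
    field_simp
end
end

section
/- Let R : [1,∞) → [0,∞) be monotone decreasing with ∫₁^∞ R(x) dx < ∞. Then the lattice sum Σ'_{k∈ℤ²∖{0}} R(|k|) satisfies ∫_Ω R(|x|) dx − 4∫₁^∞ R(x) dx − 4R(1) ≤ Σ' R(|k|) ≤ ∫_Ω R(|x|) dx + 4∫₁^∞ R(x) dx + 4R(1) + 4R(√2), where Ω = {(x,y) ∈ ℝ² : max(|x|,|y|) ≥ 1}. -/
open Real MeasureTheory
open Set
open scoped ENNReal NNReal

noncomputable section

namespace LatticeAux

/-- outward interval (for lower bound squares) -/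
def Iset (m : ℤ) : Set ℝ := if 0 ≤ m then Icc (m:ℝ) (m+1) else Icc ((m:ℝ)-1) m
/-- inward interval (for upper bound squares) -/
def Jset (m : ℤ) : Set ℝ := if 1 ≤ m then Ioc ((m:ℝ)-1) m else Ico (m:ℝ) ((m:ℝ)+1)

lemma volume_Iset (m : ℤ) : volume (Iset m) = 1 := by
  unfold Iset; split <;> simp [Real.volume_Icc]

lemma volume_Jset (m : ℤ) : volume (Jset m) = 1 := by
  unfold Jset; split <;> simp [Real.volume_Ioc, Real.volume_Ico]

lemma measurableSet_Iset (m : ℤ) : MeasurableSet (Iset m) := by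
  unfold Iset; split <;> exact measurableSet_Icc

lemma measurableSet_Jset (m : ℤ) : MeasurableSet (Jset m) := by
  unfold Jset; split
  · exact measurableSet_Ioc
  · exact measurableSet_Ico

lemma abs_le_of_mem_Iset {m : ℤ} {x : ℝ} (hx : x ∈ Iset m) : |(m:ℝ)| ≤ |x| := by
  unfold Iset at hx; split at hx
  · rename_i h
    have h0 : (0:ℝ) ≤ (m:ℝ) := by exact_mod_cast h
    rw [abs_of_nonneg h0, abs_of_nonneg (le_trans h0 hx.1)]; exact hx.1
  · rename_i h
    have h0 : (m:ℝ) ≤ 0 := by exact_mod_cast le_of_lt (lt_of_not_ge h)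
    rw [abs_of_nonpos h0, abs_of_nonpos (le_trans hx.2 h0)]; linarith [hx.2]

lemma abs_le_of_mem_Jset {m : ℤ} (hm : m ≠ 0) {x : ℝ} (hx : x ∈ Jset m) : |x| ≤ |(m:ℝ)| := by
  unfold Jset at hx; split at hx
  · rename_i h
    have h1 : (1:ℝ) ≤ (m:ℝ) := by exact_mod_cast h
    rw [abs_of_nonneg (by linarith [hx.1]), abs_of_nonneg (by linarith)]; exact hx.2
  · rename_i h
    have h1 : (m:ℝ) ≤ -1 := by exact_mod_cast (by omega : m ≤ -1)
    rw [abs_of_nonpos (by linarith [hx.2]), abs_of_nonpos (by linarith)]; linarith [hx.1]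

lemma one_le_abs_of_mem_Jset {m : ℤ} (hm : 2 ≤ |m|) {x : ℝ} (hx : x ∈ Jset m) : 1 ≤ |x| := by
  unfold Jset at hx; split at hx
  · rename_i h
    rw [abs_of_nonneg (by omega)] at hm
    have h2 : (2:ℝ) ≤ (m:ℝ) := by exact_mod_cast hm
    rw [abs_of_nonneg (by linarith [hx.1])]; linarith [hx.1]
  · rename_i h
    rw [abs_of_nonpos (by omega)] at hm
    have h2 : (m:ℝ) ≤ -2 := by exact_mod_cast (by omega : m ≤ -2)
    rw [abs_of_nonpos (by linarith [hx.2])]; linarith [hx.2]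

lemma Jset_disjoint {m m' : ℤ} (hm : m ≠ 0) (hm' : m' ≠ 0) (h : m ≠ m') :
    Disjoint (Jset m) (Jset m') := by
  rw [Set.disjoint_left]
  intro x hx hx'
  unfold Jset at hx hx'
  split at hx <;> split at hx' <;> rename_i h1 h2
  · have : (m:ℝ) ≤ m' - 1 ∨ (m':ℝ) ≤ m - 1 := by
      rcases lt_or_gt_of_ne h with h' | h'
      · left; exact_mod_cast (by omega : m ≤ m' - 1)
      · right; exact_mod_cast (by omega : m' ≤ m - 1)
    rcases this with h' | h' <;> linarith [hx.1, hx.2, hx'.1, hx'.2]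
  · have hA : (1:ℝ) ≤ (m:ℝ) := by exact_mod_cast h1
    have hB : (m':ℝ) + 1 ≤ 0 := by exact_mod_cast (by omega : m' + 1 ≤ 0)
    linarith [hx.1, hx'.2]
  · have hA : (1:ℝ) ≤ (m':ℝ) := by exact_mod_cast h2
    have hB : (m:ℝ) + 1 ≤ 0 := by exact_mod_cast (by omega : m + 1 ≤ 0)
    linarith [hx'.1, hx.2]
  · have : (m:ℝ) + 1 ≤ m' ∨ (m':ℝ) + 1 ≤ m := by
      rcases lt_or_gt_of_ne h with h' | h'
      · left; exact_mod_cast (by omega : m + 1 ≤ m')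
      · right; exact_mod_cast (by omega : m' + 1 ≤ m)
    rcases this with h' | h' <;> linarith [hx.1, hx.2, hx'.1, hx'.2]

lemma mem_Iset_cover_nonneg {t : ℝ} (ht : 0 ≤ t) : t ∈ Iset ⌊t⌋ ∧ (1 ≤ t → ⌊t⌋ ≠ 0) := by
  have h0 : 0 ≤ ⌊t⌋ := Int.le_floor.2 (by exact_mod_cast ht)
  constructor
  · unfold Iset; rw [if_pos h0]
    exact ⟨Int.floor_le t, le_of_lt (Int.lt_floor_add_one t)⟩
  · intro h1 h0'
    have := Int.floor_le t
    have h2 : (1:ℤ) ≤ ⌊t⌋ := Int.le_floor.2 (by exact_mod_cast h1)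
    omega

lemma mem_Iset_cover_neg {t : ℝ} (ht : t ≤ -1) : t ∈ Iset ⌈t⌉ ∧ ⌈t⌉ ≠ 0 := by
  have h0 : ⌈t⌉ ≤ -1 := Int.ceil_le.2 (by exact_mod_cast ht)
  constructor
  · unfold Iset; rw [if_neg (by omega)]
    exact ⟨by linarith [Int.ceil_lt_add_one t], Int.le_ceil t⟩
  · omega


def nrm (p : ℝ × ℝ) : ℝ := Real.sqrt (p.1 ^ 2 + p.2 ^ 2)
def Om : Set (ℝ × ℝ) := {p : ℝ × ℝ | 1 ≤ max |p.1| |p.2|}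

lemma measurable_nrm : Measurable nrm := by
  have : Continuous nrm := by unfold nrm; fun_prop
  exact this.measurable

lemma measurableSet_Om : MeasurableSet Om := by
  have : Continuous fun p : ℝ × ℝ => max |p.1| |p.2| := by fun_prop
  exact measurableSet_le measurable_const this.measurable

lemma nrm_mono {p q : ℝ × ℝ} (h1 : |p.1| ≤ |q.1|) (h2 : |p.2| ≤ |q.2|) : nrm p ≤ nrm q := by
  unfold nrm
  apply Real.sqrt_le_sqrt
  have a1 : p.1 ^ 2 ≤ q.1 ^ 2 := by
    rw [← sq_abs p.1, ← sq_abs q.1]; exact pow_le_pow_left₀ (abs_nonneg _) h1 2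
  have a2 : p.2 ^ 2 ≤ q.2 ^ 2 := by
    rw [← sq_abs p.2, ← sq_abs q.2]; exact pow_le_pow_left₀ (abs_nonneg _) h2 2
  linarith

lemma abs_fst_le_nrm (p : ℝ × ℝ) : |p.1| ≤ nrm p := by
  rw [← Real.sqrt_sq_eq_abs]; exact Real.sqrt_le_sqrt (by nlinarith [sq_nonneg p.2])

lemma abs_snd_le_nrm (p : ℝ × ℝ) : |p.2| ≤ nrm p := by
  rw [← Real.sqrt_sq_eq_abs]; exact Real.sqrt_le_sqrt (by nlinarith [sq_nonneg p.1])

lemma one_le_nrm_of_mem_Om {p : ℝ × ℝ} (hp : p ∈ Om) : 1 ≤ nrm p := by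
  rcases le_max_iff.1 (show 1 ≤ max |p.1| |p.2| from hp) with h | h
  · exact le_trans h (abs_fst_le_nrm p)
  · exact le_trans h (abs_snd_le_nrm p)

lemma mem_Om_iff {p : ℝ × ℝ} : p ∈ Om ↔ 1 ≤ |p.1| ∨ 1 ≤ |p.2| := by
  show 1 ≤ max |p.1| |p.2| ↔ _
  exact le_max_iff

section QSec
variable {Q : ℝ → ℝ}

def g (Q : ℝ → ℝ) (p : ℝ × ℝ) : ℝ≥0∞ := ENNReal.ofReal (Q (nrm p))

lemma measurable_g (hQ : Antitone Q) : Measurable (g Q) :=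
  ENNReal.measurable_ofReal.comp (hQ.measurable.comp measurable_nrm)

lemma lintegral_prod_snd {h : ℝ → ℝ≥0∞} (hh : Measurable h) (s t : Set ℝ) :
    ∫⁻ p in s ×ˢ t, h p.2 = volume s * ∫⁻ y in t, h y := by
  rw [Measure.volume_eq_prod, ← Measure.prod_restrict,
    lintegral_prod (fun z => h z.2) ((hh.comp measurable_snd).aemeasurable)]
  simp only [lintegral_const, Measure.restrict_apply_univ]
  rw [mul_comm]

lemma lintegral_prod_fst {h : ℝ → ℝ≥0∞} (hh : Measurable h) (s t : Set ℝ) :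
    ∫⁻ p in s ×ˢ t, h p.1 = volume t * ∫⁻ x in s, h x := by
  rw [Measure.volume_eq_prod, ← Measure.prod_restrict,
    lintegral_prod (fun z => h z.1) ((hh.comp measurable_fst).aemeasurable)]
  have : ∀ x : ℝ, ∫⁻ _ in t, h x = h x * volume t := fun x => by
    rw [setLIntegral_const]
  simp only [this]
  rw [lintegral_mul_const _ hh, mul_comm]

lemma refl_lintegral (hQ : Antitone Q) :
    ∫⁻ y in Iic (-1 : ℝ), ENNReal.ofReal (Q |y|) = ∫⁻ y in Ici (1 : ℝ), ENNReal.ofReal (Q |y|) := by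
  have hne : MeasurePreserving (Neg.neg : ℝ → ℝ) volume volume := Measure.measurePreserving_neg _
  have hemb : MeasurableEmbedding (Neg.neg : ℝ → ℝ) := (Homeomorph.neg ℝ).measurableEmbedding
  have h := hne.setLIntegral_comp_emb hemb (fun y => ENNReal.ofReal (Q |y|)) (Ici 1)
  rw [show (Neg.neg '' Ici (1 : ℝ)) = Iic (-1) by rw [Set.image_neg_eq_neg, Set.neg_Ici]] at h
  rw [← h]
  simp [abs_neg]

/-- the key 1D integral in ENNReal form -/
def I1 (Q : ℝ → ℝ) : ℝ≥0∞ := ∫⁻ x in Ioi (1 : ℝ), ENNReal.ofReal (Q x)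

lemma lintegral_absQ_Ici (hQ : Antitone Q) :
    ∫⁻ y in Ici (1 : ℝ), ENNReal.ofReal (Q |y|) = I1 Q := by
  rw [setLIntegral_congr (Filter.EventuallyEq.symm MeasureTheory.Ioi_ae_eq_Ici)]
  exact setLIntegral_congr_fun measurableSet_Ioi (fun x hx => by
    rw [abs_of_nonneg (by linarith [mem_Ioi.1 hx] : (0:ℝ) ≤ x)])

lemma strip_bound (hQ : Antitone Q) {s t : Set ℝ} (hs : volume s = 1)
    (hi : ∫⁻ y in t, ENNReal.ofReal (Q |y|) = I1 Q) :
    ∫⁻ p in s ×ˢ t, g Q p ≤ I1 Q := by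
  have habs : Measurable fun y : ℝ => ENNReal.ofReal (Q |y|) :=
    ENNReal.measurable_ofReal.comp (hQ.measurable.comp measurable_abs)
  calc ∫⁻ p in s ×ˢ t, g Q p ≤ ∫⁻ p in s ×ˢ t, ENNReal.ofReal (Q |p.2|) := by
        refine lintegral_mono fun p => ?_
        exact ENNReal.ofReal_le_ofReal (hQ (abs_snd_le_nrm p))
    _ = volume s * ∫⁻ y in t, ENNReal.ofReal (Q |y|) := lintegral_prod_snd habs s t
    _ = I1 Q := by rw [hs, hi, one_mul]

lemma strip_bound' (hQ : Antitone Q) {s t : Set ℝ} (ht : volume t = 1)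
    (hi : ∫⁻ x in s, ENNReal.ofReal (Q |x|) = I1 Q) :
    ∫⁻ p in s ×ˢ t, g Q p ≤ I1 Q := by
  have habs : Measurable fun y : ℝ => ENNReal.ofReal (Q |y|) :=
    ENNReal.measurable_ofReal.comp (hQ.measurable.comp measurable_abs)
  calc ∫⁻ p in s ×ˢ t, g Q p ≤ ∫⁻ p in s ×ˢ t, ENNReal.ofReal (Q |p.1|) := by
        refine lintegral_mono fun p => ?_
        exact ENNReal.ofReal_le_ofReal (hQ (abs_fst_le_nrm p))
    _ = volume t * ∫⁻ x in s, ENNReal.ofReal (Q |x|) := lintegral_prod_fst habs s t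
    _ = I1 Q := by rw [ht, hi, one_mul]

def emb (k : ℤ × ℤ) : ℝ × ℝ := ((k.1 : ℝ), (k.2 : ℝ))

lemma sqrt_ksq_eq (k : ℤ × ℤ) : Real.sqrt (ksq k) = nrm (emb k) := rfl

lemma one_le_sqrt_ksq {k : ℤ × ℤ} (hk : k ≠ 0) : 1 ≤ Real.sqrt (ksq k) := by
  have h1 : (1 : ℝ) ≤ ksq k := by
    have : k.1 ≠ 0 ∨ k.2 ≠ 0 := by
      by_contra hc; push_neg at hc; exact hk (Prod.ext hc.1 hc.2)
    unfold ksq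
    rcases this with h | h
    · have : (1 : ℝ) ≤ (k.1 : ℝ) ^ 2 := by
        have : (1 : ℤ) ≤ k.1 ^ 2 := by rcases h.lt_or_gt with h' | h' <;> nlinarith
        exact_mod_cast this
      nlinarith [sq_nonneg (k.2 : ℝ)]
    · have : (1 : ℝ) ≤ (k.2 : ℝ) ^ 2 := by
        have : (1 : ℤ) ≤ k.2 ^ 2 := by rcases h.lt_or_gt with h' | h' <;> nlinarith
        exact_mod_cast this
      nlinarith [sq_nonneg (k.1 : ℝ)]
  calc (1 : ℝ) = Real.sqrt 1 := by simp
    _ ≤ Real.sqrt (ksq k) := Real.sqrt_le_sqrt h1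

def fE (Q : ℝ → ℝ) (k : ℤ × ℤ) : ℝ≥0∞ :=
  if k = 0 then 0 else ENNReal.ofReal (Q (Real.sqrt (ksq k)))

def Sk (k : ℤ × ℤ) : Set (ℝ × ℝ) := if k = 0 then ∅ else Iset k.1 ×ˢ Iset k.2

lemma cover_coord {t : ℝ} (h : t ∉ Ioo (-1 : ℝ) 0) :
    ∃ m : ℤ, t ∈ Iset m ∧ (1 ≤ |t| → m ≠ 0) := by
  rcases le_or_gt 0 t with ht | ht
  · obtain ⟨h1, h2⟩ := mem_Iset_cover_nonneg ht
    exact ⟨⌊t⌋, h1, fun ha => h2 (by rwa [abs_of_nonneg ht] at ha)⟩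
  · have ht1 : t ≤ -1 := by
      by_contra hc; push_neg at hc; exact h ⟨hc, ht⟩
    obtain ⟨h1, h2⟩ := mem_Iset_cover_neg ht1
    exact ⟨⌈t⌉, h1, fun _ => h2⟩

lemma sq1_bound (hQ : Antitone Q) {k : ℤ × ℤ} (hk : k ≠ 0) :
    ∫⁻ p in Iset k.1 ×ˢ Iset k.2, g Q p ≤ ENNReal.ofReal (Q (Real.sqrt (ksq k))) := by
  have hvol : volume (Iset k.1 ×ˢ Iset k.2) = 1 := by
    rw [Measure.volume_eq_prod, Measure.prod_prod, volume_Iset, volume_Iset, one_mul]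
  calc ∫⁻ p in Iset k.1 ×ˢ Iset k.2, g Q p
      ≤ ∫⁻ _ in Iset k.1 ×ˢ Iset k.2, ENNReal.ofReal (Q (Real.sqrt (ksq k))) := by
        refine setLIntegral_mono measurable_const fun p hp => ?_
        refine ENNReal.ofReal_le_ofReal (hQ ?_)
        rw [sqrt_ksq_eq]
        exact nrm_mono (abs_le_of_mem_Iset hp.1) (abs_le_of_mem_Iset hp.2)
    _ = ENNReal.ofReal (Q (Real.sqrt (ksq k))) := by rw [setLIntegral_const, hvol, mul_one]

lemma cover : Om ⊆ (⋃ k : ℤ × ℤ, Sk k) ∪ (Icc (-1 : ℝ) 0 ×ˢ Ici (1 : ℝ))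
    ∪ (Icc (-1 : ℝ) 0 ×ˢ Iic (-1 : ℝ)) ∪ (Ici (1 : ℝ) ×ˢ Icc (-1 : ℝ) 0)
    ∪ (Iic (-1 : ℝ) ×ˢ Icc (-1 : ℝ) 0) := by
  intro p hp
  by_cases h1 : p.1 ∈ Ioo (-1 : ℝ) 0
  · have habs : |p.1| < 1 := abs_lt.2 ⟨h1.1, h1.2.trans zero_lt_one⟩
    have h2 : 1 ≤ |p.2| := by
      rcases mem_Om_iff.1 hp with h | h
      · linarith
      · exact h
    have hx : p.1 ∈ Icc (-1 : ℝ) 0 := ⟨h1.1.le, h1.2.le⟩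
    rcases le_abs.1 h2 with hy | hy
    · exact Or.inl (Or.inl (Or.inl (Or.inr ⟨hx, hy⟩)))
    · exact Or.inl (Or.inl (Or.inr ⟨hx, mem_Iic.2 (by linarith [(by simpa using hy : 1 ≤ -p.2)])⟩))
  by_cases h2 : p.2 ∈ Ioo (-1 : ℝ) 0
  · have habs : |p.2| < 1 := abs_lt.2 ⟨h2.1, h2.2.trans zero_lt_one⟩
    have h1' : 1 ≤ |p.1| := by
      rcases mem_Om_iff.1 hp with h | h
      · exact h
      · linarith
    have hy : p.2 ∈ Icc (-1 : ℝ) 0 := ⟨h2.1.le, h2.2.le⟩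
    rcases le_abs.1 h1' with hx | hx
    · exact Or.inl (Or.inr ⟨hx, hy⟩)
    · exact Or.inr ⟨mem_Iic.2 (by linarith [(by simpa using hx : 1 ≤ -p.1)]), hy⟩
  obtain ⟨m1, hm1, hm1'⟩ := cover_coord h1
  obtain ⟨m2, hm2, hm2'⟩ := cover_coord h2
  have hk : ((m1, m2) : ℤ × ℤ) ≠ 0 := by
    rcases mem_Om_iff.1 hp with h | h
    · exact fun hc => hm1' h (by rw [Prod.ext_iff] at hc; exact hc.1)
    · exact fun hc => hm2' h (by rw [Prod.ext_iff] at hc; exact hc.2)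
  refine Or.inl (Or.inl (Or.inl (Or.inl ?_)))
  refine Set.mem_iUnion.2 ⟨(m1, m2), ?_⟩
  unfold Sk
  rw [if_neg hk]
  exact ⟨hm1, hm2⟩

lemma chain1 (hQ : Antitone Q) :
    ∫⁻ p in Om, g Q p ≤ (∑' k : ℤ × ℤ, fE Q k) + 4 * I1 Q := by
  have hIcc : volume (Icc (-1 : ℝ) 0) = 1 := by simp [Real.volume_Icc]
  have hV1 : ∫⁻ p in Icc (-1 : ℝ) 0 ×ˢ Ici (1 : ℝ), g Q p ≤ I1 Q :=
    strip_bound hQ hIcc (lintegral_absQ_Ici hQ)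
  have hV2 : ∫⁻ p in Icc (-1 : ℝ) 0 ×ˢ Iic (-1 : ℝ), g Q p ≤ I1 Q :=
    strip_bound hQ hIcc ((refl_lintegral hQ).trans (lintegral_absQ_Ici hQ))
  have hH1 : ∫⁻ p in Ici (1 : ℝ) ×ˢ Icc (-1 : ℝ) 0, g Q p ≤ I1 Q :=
    strip_bound' hQ hIcc (lintegral_absQ_Ici hQ)
  have hH2 : ∫⁻ p in Iic (-1 : ℝ) ×ˢ Icc (-1 : ℝ) 0, g Q p ≤ I1 Q :=
    strip_bound' hQ hIcc ((refl_lintegral hQ).trans (lintegral_absQ_Ici hQ))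
  have hU : ∫⁻ p in ⋃ k : ℤ × ℤ, Sk k, g Q p ≤ ∑' k : ℤ × ℤ, fE Q k := by
    refine le_trans (lintegral_iUnion_le _ _) (ENNReal.tsum_le_tsum fun k => ?_)
    by_cases hk : k = 0
    · simp [Sk, hk, fE]
    · unfold Sk fE
      rw [if_neg hk, if_neg hk]
      exact sq1_bound hQ hk
  calc ∫⁻ p in Om, g Q p
      ≤ ∫⁻ p in (⋃ k : ℤ × ℤ, Sk k) ∪ (Icc (-1 : ℝ) 0 ×ˢ Ici (1 : ℝ))
          ∪ (Icc (-1 : ℝ) 0 ×ˢ Iic (-1 : ℝ)) ∪ (Ici (1 : ℝ) ×ˢ Icc (-1 : ℝ) 0)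
          ∪ (Iic (-1 : ℝ) ×ˢ Icc (-1 : ℝ) 0), g Q p := lintegral_mono_set cover
    _ ≤ (∑' k : ℤ × ℤ, fE Q k) + I1 Q + I1 Q + I1 Q + I1 Q := by
        refine le_trans (lintegral_union_le _ _ _) (add_le_add ?_ hH2)
        refine le_trans (lintegral_union_le _ _ _) (add_le_add ?_ hH1)
        refine le_trans (lintegral_union_le _ _ _) (add_le_add ?_ hV2)
        exact le_trans (lintegral_union_le _ _ _) (add_le_add hU hV1)
    _ = (∑' k : ℤ × ℤ, fE Q k) + 4 * I1 Q := by ring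


def vE (Q : ℝ → ℝ) (k : ℤ × ℤ) : ℝ≥0∞ := ENNReal.ofReal (Q (Real.sqrt (ksq k)))

def Bcond (k : ℤ × ℤ) : Prop :=
  k.1 ≠ 0 ∧ k.2 ≠ 0 ∧ (2 ≤ k.1 ∨ k.1 ≤ -2 ∨ 2 ≤ k.2 ∨ k.2 ≤ -2)

instance : DecidablePred Bcond := fun k => by unfold Bcond; infer_instance

def bb (Q : ℝ → ℝ) (k : ℤ × ℤ) : ℝ≥0∞ := if Bcond k then vE Q k else 0
def a1 (Q : ℝ → ℝ) (k : ℤ × ℤ) : ℝ≥0∞ := if 1 ≤ k.1 ∧ k.2 = 0 then vE Q k else 0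
def a2 (Q : ℝ → ℝ) (k : ℤ × ℤ) : ℝ≥0∞ := if k.1 ≤ -1 ∧ k.2 = 0 then vE Q k else 0
def a3 (Q : ℝ → ℝ) (k : ℤ × ℤ) : ℝ≥0∞ := if k.1 = 0 ∧ 1 ≤ k.2 then vE Q k else 0
def a4 (Q : ℝ → ℝ) (k : ℤ × ℤ) : ℝ≥0∞ := if k.1 = 0 ∧ k.2 ≤ -1 then vE Q k else 0
def dd (Q : ℝ → ℝ) (k : ℤ × ℤ) : ℝ≥0∞ :=
  if (k.1 = 1 ∨ k.1 = -1) ∧ (k.2 = 1 ∨ k.2 = -1) then vE Q k else 0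

lemma fE_decomp (Q : ℝ → ℝ) (k : ℤ × ℤ) :
    fE Q k = bb Q k + a1 Q k + a2 Q k + a3 Q k + a4 Q k + dd Q k := by
  unfold fE bb a1 a2 a3 a4 dd
  by_cases h0 : k = 0
  · rw [if_pos h0]; subst h0; norm_num [Bcond]
  · rw [if_neg h0]
    have hk : ¬(k.1 = 0 ∧ k.2 = 0) := fun hc => h0 (Prod.ext hc.1 hc.2)
    split_ifs <;> unfold Bcond at * <;> first | (exfalso; omega) | simp [vE]

lemma tsum_dd (Q : ℝ → ℝ) : ∑' k : ℤ × ℤ, dd Q k = 4 * ENNReal.ofReal (Q (Real.sqrt 2)) := by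
  have hsupp : ∀ k ∉ ({((1:ℤ),(1:ℤ)), (1,-1), (-1,1), (-1,-1)} : Finset (ℤ × ℤ)),
      dd Q k = 0 := by
    intro k hk
    obtain ⟨a, b⟩ := k
    unfold dd
    rw [if_neg]
    intro ⟨h1, h2⟩
    apply hk
    simp only [Finset.mem_insert, Finset.mem_singleton, Prod.ext_iff]
    simp only [Prod.fst, Prod.snd] at h1 h2
    omega
  have hv : ∀ a b : ℤ, a = 1 ∨ a = -1 → b = 1 ∨ b = -1 →
      vE Q (a, b) = ENNReal.ofReal (Q (Real.sqrt 2)) := by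
    intro a b ha hb
    have : ksq (a, b) = 2 := by
      unfold ksq; rcases ha with rfl | rfl <;> rcases hb with rfl | rfl <;> norm_num
    rw [vE, this]
  rw [tsum_eq_sum hsupp]
  have h11 : dd Q (1, 1) = ENNReal.ofReal (Q (Real.sqrt 2)) := by
    rw [dd, if_pos (by norm_num), hv 1 1 (Or.inl rfl) (Or.inl rfl)]
  have h12 : dd Q (1, -1) = ENNReal.ofReal (Q (Real.sqrt 2)) := by
    rw [dd, if_pos (by norm_num), hv 1 (-1) (Or.inl rfl) (Or.inr rfl)]
  have h21 : dd Q (-1, 1) = ENNReal.ofReal (Q (Real.sqrt 2)) := by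
    rw [dd, if_pos (by norm_num), hv (-1) 1 (Or.inr rfl) (Or.inl rfl)]
  have h22 : dd Q (-1, -1) = ENNReal.ofReal (Q (Real.sqrt 2)) := by
    rw [dd, if_pos (by norm_num), hv (-1) (-1) (Or.inr rfl) (Or.inr rfl)]
  rw [Finset.sum_insert (by decide), Finset.sum_insert (by decide),
    Finset.sum_insert (by decide), Finset.sum_singleton, h11, h12, h21, h22]
  ring

def Sax (Q : ℝ → ℝ) : ℝ≥0∞ := ∑' n : ℕ, ENNReal.ofReal (Q ((n : ℝ) + 1))

lemma vE_axis_fst (Q : ℝ → ℝ) (m : ℤ) (hm : m ≠ 0) :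
    vE Q (m, 0) = ENNReal.ofReal (Q |(m : ℝ)|) := by
  rw [vE]
  congr 1
  have : ksq (m, 0) = (m : ℝ) ^ 2 := by unfold ksq; norm_num
  rw [this, ← sq_abs, Real.sqrt_sq (abs_nonneg _)]

lemma vE_axis_snd (Q : ℝ → ℝ) (m : ℤ) (hm : m ≠ 0) :
    vE Q (0, m) = ENNReal.ofReal (Q |(m : ℝ)|) := by
  rw [vE]
  congr 1
  have : ksq (0, m) = (m : ℝ) ^ 2 := by unfold ksq; norm_num
  rw [this, ← sq_abs, Real.sqrt_sq (abs_nonneg _)]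

lemma tsum_a1 (Q : ℝ → ℝ) : ∑' k : ℤ × ℤ, a1 Q k = Sax Q := by
  have hinj : Function.Injective (fun n : ℕ => (((n : ℤ) + 1, 0) : ℤ × ℤ)) := by
    intro a b h; simp only [Prod.ext_iff] at h; omega
  have hsupp : Function.support (a1 Q) ⊆ Set.range (fun n : ℕ => (((n : ℤ) + 1, 0) : ℤ × ℤ)) := by
    intro k hk
    have hc : 1 ≤ k.1 ∧ k.2 = 0 := by
      by_contra hc; exact hk (by rw [a1, if_neg hc])
    exact ⟨(k.1 - 1).toNat, by rw [Prod.ext_iff]; constructor <;> simp <;> omega⟩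
  rw [← hinj.tsum_eq hsupp]
  refine tsum_congr fun n => ?_
  rw [a1, if_pos ⟨by simp, rfl⟩, vE_axis_fst Q _ (by omega)]
  congr 1
  rw [abs_of_nonneg (by positivity)]
  push_cast
  ring

lemma tsum_a2 (Q : ℝ → ℝ) : ∑' k : ℤ × ℤ, a2 Q k = Sax Q := by
  have hinj : Function.Injective (fun n : ℕ => ((-(n : ℤ) - 1, 0) : ℤ × ℤ)) := by
    intro a b h; simp only [Prod.ext_iff] at h; omega
  have hsupp : Function.support (a2 Q) ⊆ Set.range (fun n : ℕ => ((-(n : ℤ) - 1, 0) : ℤ × ℤ)) := by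
    intro k hk
    have hc : k.1 ≤ -1 ∧ k.2 = 0 := by
      by_contra hc; exact hk (by rw [a2, if_neg hc])
    exact ⟨(-k.1 - 1).toNat, by rw [Prod.ext_iff]; constructor <;> simp <;> omega⟩
  rw [← hinj.tsum_eq hsupp]
  refine tsum_congr fun n => ?_
  rw [a2, if_pos ⟨by omega, rfl⟩, vE_axis_fst Q _ (by omega)]
  congr 1
  rw [show ((-(n : ℤ) - 1 : ℤ) : ℝ) = -((n : ℝ) + 1) by push_cast; ring, abs_neg,
    abs_of_nonneg (by positivity)]

lemma tsum_a3 (Q : ℝ → ℝ) : ∑' k : ℤ × ℤ, a3 Q k = Sax Q := by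
  have hinj : Function.Injective (fun n : ℕ => ((0, (n : ℤ) + 1) : ℤ × ℤ)) := by
    intro a b h; simp only [Prod.ext_iff] at h; omega
  have hsupp : Function.support (a3 Q) ⊆ Set.range (fun n : ℕ => ((0, (n : ℤ) + 1) : ℤ × ℤ)) := by
    intro k hk
    have hc : k.1 = 0 ∧ 1 ≤ k.2 := by
      by_contra hc; exact hk (by rw [a3, if_neg hc])
    exact ⟨(k.2 - 1).toNat, by rw [Prod.ext_iff]; constructor <;> simp <;> omega⟩
  rw [← hinj.tsum_eq hsupp]
  refine tsum_congr fun n => ?_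
  rw [a3, if_pos ⟨rfl, by simp⟩, vE_axis_snd Q _ (by omega)]
  congr 1
  rw [abs_of_nonneg (by positivity)]
  push_cast
  ring

lemma tsum_a4 (Q : ℝ → ℝ) : ∑' k : ℤ × ℤ, a4 Q k = Sax Q := by
  have hinj : Function.Injective (fun n : ℕ => ((0, -(n : ℤ) - 1) : ℤ × ℤ)) := by
    intro a b h; simp only [Prod.ext_iff] at h; omega
  have hsupp : Function.support (a4 Q) ⊆ Set.range (fun n : ℕ => ((0, -(n : ℤ) - 1) : ℤ × ℤ)) := by
    intro k hk
    have hc : k.1 = 0 ∧ k.2 ≤ -1 := by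
      by_contra hc; exact hk (by rw [a4, if_neg hc])
    exact ⟨(-k.2 - 1).toNat, by rw [Prod.ext_iff]; constructor <;> simp <;> omega⟩
  rw [← hinj.tsum_eq hsupp]
  refine tsum_congr fun n => ?_
  rw [a4, if_pos ⟨rfl, by omega⟩, vE_axis_snd Q _ (by omega)]
  congr 1
  rw [show ((-(n : ℤ) - 1 : ℤ) : ℝ) = -((n : ℝ) + 1) by push_cast; ring, abs_neg,
    abs_of_nonneg (by positivity)]

lemma Sax_le (hQ : Antitone Q) : Sax Q ≤ ENNReal.ofReal (Q 1) + I1 Q := by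
  have hmeas : Measurable fun x : ℝ => ENNReal.ofReal (Q x) :=
    ENNReal.measurable_ofReal.comp hQ.measurable
  have hterm : ∀ n : ℕ, ENNReal.ofReal (Q ((n : ℝ) + 2))
      ≤ ∫⁻ x in Ioc ((n : ℝ) + 1) ((n : ℝ) + 2), ENNReal.ofReal (Q x) := by
    intro n
    have hvol : volume (Ioc ((n : ℝ) + 1) ((n : ℝ) + 2)) = 1 := by
      rw [Real.volume_Ioc]; norm_num
    calc ENNReal.ofReal (Q ((n : ℝ) + 2))
        = ∫⁻ _ in Ioc ((n : ℝ) + 1) ((n : ℝ) + 2), ENNReal.ofReal (Q ((n : ℝ) + 2)) := by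
          rw [setLIntegral_const, hvol, mul_one]
      _ ≤ ∫⁻ x in Ioc ((n : ℝ) + 1) ((n : ℝ) + 2), ENNReal.ofReal (Q x) :=
          setLIntegral_mono hmeas fun x hx => ENNReal.ofReal_le_ofReal (hQ hx.2)
  have hdisj : Pairwise (Function.onFun Disjoint fun n : ℕ => Ioc ((n : ℝ) + 1) ((n : ℝ) + 2)) := by
    intro m n hmn
    rw [Function.onFun, Set.Ioc_disjoint_Ioc]
    rcases hmn.lt_or_gt with h | h
    · refine le_trans (min_le_left _ _) (le_trans ?_ (le_max_right _ _))
      exact_mod_cast (by omega : m + 2 ≤ n + 1)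
    · refine le_trans (min_le_right _ _) (le_trans ?_ (le_max_left _ _))
      exact_mod_cast (by omega : n + 2 ≤ m + 1)
  have hsum : ∑' n : ℕ, ∫⁻ x in Ioc ((n : ℝ) + 1) ((n : ℝ) + 2), ENNReal.ofReal (Q x) ≤ I1 Q := by
    rw [← lintegral_iUnion (fun n => measurableSet_Ioc) hdisj]
    refine lintegral_mono_set ?_
    refine Set.iUnion_subset fun n => fun x hx => ?_
    have : (0 : ℝ) ≤ (n : ℝ) := n.cast_nonneg
    exact mem_Ioi.2 (by linarith [hx.1])
  calc Sax Q = ENNReal.ofReal (Q 1) + ∑' n : ℕ, ENNReal.ofReal (Q ((n : ℝ) + 1 + 1)) := by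
        rw [Sax, tsum_eq_zero_add' (by simp [ENNReal.summable])]
        norm_num
    _ ≤ ENNReal.ofReal (Q 1) + I1 Q := by
        refine add_le_add_right (le_trans (ENNReal.tsum_le_tsum fun n => ?_) hsum) _
        exact le_trans (le_of_eq (by rw [show ((n:ℝ)+1+1) = (n:ℝ)+2 by ring])) (hterm n)


def Tk (k : ℤ × ℤ) : Set (ℝ × ℝ) := if Bcond k then Jset k.1 ×ˢ Jset k.2 else ∅

lemma Tk_subset_Om {k : ℤ × ℤ} : Tk k ⊆ Om := by
  unfold Tk
  split
  · rename_i hc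
    intro p hp
    rw [mem_Om_iff]
    rcases hc.2.2 with h | h | h | h
    · exact Or.inl (one_le_abs_of_mem_Jset (le_trans h (le_abs_self _)) hp.1)
    · exact Or.inl (one_le_abs_of_mem_Jset (by rw [abs_of_nonpos (by omega)]; omega) hp.1)
    · exact Or.inr (one_le_abs_of_mem_Jset (le_trans h (le_abs_self _)) hp.2)
    · exact Or.inr (one_le_abs_of_mem_Jset (by rw [abs_of_nonpos (by omega)]; omega) hp.2)
  · exact Set.empty_subset _

lemma Tk_meas (k : ℤ × ℤ) : MeasurableSet (Tk k) := by
  unfold Tk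
  split
  · exact (measurableSet_Jset _).prod (measurableSet_Jset _)
  · exact MeasurableSet.empty

lemma Tk_disjoint : Pairwise (Function.onFun Disjoint Tk) := by
  intro k k' hkk
  rw [Function.onFun]
  unfold Tk
  split <;> split
  · rename_i hc hc'
    have : k.1 ≠ k'.1 ∨ k.2 ≠ k'.2 := by
      by_contra hcon; push_neg at hcon; exact hkk (Prod.ext hcon.1 hcon.2)
    rw [Set.disjoint_left]
    intro p hp hp'
    rcases this with h | h
    · exact (Set.disjoint_left.1 (Jset_disjoint hc.1 hc'.1 h)) hp.1 hp'.1
    · exact (Set.disjoint_left.1 (Jset_disjoint hc.2.1 hc'.2.1 h)) hp.2 hp'.2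
  · exact Set.disjoint_empty _
  · exact Set.empty_disjoint _
  · exact Set.empty_disjoint _

lemma bb_le_lintegral_Tk (hQ : Antitone Q) (k : ℤ × ℤ) :
    bb Q k ≤ ∫⁻ p in Tk k, g Q p := by
  unfold bb Tk
  split
  · rename_i hc
    have hvol : volume (Jset k.1 ×ˢ Jset k.2) = 1 := by
      rw [Measure.volume_eq_prod, Measure.prod_prod, volume_Jset, volume_Jset, one_mul]
    calc vE Q k = ∫⁻ _ in Jset k.1 ×ˢ Jset k.2, vE Q k := by
          rw [setLIntegral_const, hvol, mul_one]
      _ ≤ ∫⁻ p in Jset k.1 ×ˢ Jset k.2, g Q p := by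
          refine setLIntegral_mono (measurable_g hQ) fun p hp => ?_
          refine ENNReal.ofReal_le_ofReal (hQ ?_)
          rw [sqrt_ksq_eq]
          exact nrm_mono (abs_le_of_mem_Jset hc.1 hp.1) (abs_le_of_mem_Jset hc.2.1 hp.2)
  · simp

lemma tsum_bb_le (hQ : Antitone Q) : ∑' k : ℤ × ℤ, bb Q k ≤ ∫⁻ p in Om, g Q p := by
  calc ∑' k : ℤ × ℤ, bb Q k ≤ ∑' k : ℤ × ℤ, ∫⁻ p in Tk k, g Q p :=
        ENNReal.tsum_le_tsum fun k => bb_le_lintegral_Tk hQ k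
    _ = ∫⁻ p in ⋃ k : ℤ × ℤ, Tk k, g Q p := (lintegral_iUnion Tk_meas Tk_disjoint _).symm
    _ ≤ ∫⁻ p in Om, g Q p := lintegral_mono_set (Set.iUnion_subset fun k => Tk_subset_Om)

lemma chain2 (hQ : Antitone Q) :
    ∑' k : ℤ × ℤ, fE Q k ≤ (∫⁻ p in Om, g Q p) + 4 * (ENNReal.ofReal (Q 1) + I1 Q)
      + 4 * ENNReal.ofReal (Q (Real.sqrt 2)) := by
  calc ∑' k : ℤ × ℤ, fE Q k
      = ∑' k : ℤ × ℤ, (bb Q k + a1 Q k + a2 Q k + a3 Q k + a4 Q k + dd Q k) :=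
        tsum_congr (fE_decomp Q)
    _ = (∑' k : ℤ × ℤ, bb Q k) + Sax Q + Sax Q + Sax Q + Sax Q
        + 4 * ENNReal.ofReal (Q (Real.sqrt 2)) := by
        rw [ENNReal.tsum_add, ENNReal.tsum_add, ENNReal.tsum_add, ENNReal.tsum_add,
          ENNReal.tsum_add, tsum_a1, tsum_a2, tsum_a3, tsum_a4, tsum_dd]
    _ ≤ (∫⁻ p in Om, g Q p) + (ENNReal.ofReal (Q 1) + I1 Q) + (ENNReal.ofReal (Q 1) + I1 Q)
        + (ENNReal.ofReal (Q 1) + I1 Q) + (ENNReal.ofReal (Q 1) + I1 Q)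
        + 4 * ENNReal.ofReal (Q (Real.sqrt 2)) := by
        gcongr
        · exact tsum_bb_le hQ
        all_goals exact Sax_le hQ
    _ = (∫⁻ p in Om, g Q p) + 4 * (ENNReal.ofReal (Q 1) + I1 Q)
        + 4 * ENNReal.ofReal (Q (Real.sqrt 2)) := by ring


end QSec
end LatticeAux


open LatticeAux

/-- Comparison of the 2D lattice sum `Σ'_{k≠0} R(|k|)` with the integral of `R(|x|)`
over `Ω = {x ∈ ℝ² : max(|x₁|,|x₂|) ≥ 1}`, for `R` nonnegative, nonincreasing and
integrable on `[1,∞)`. -/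
theorem lattice_sum_integral_comparison (R : ℝ → ℝ)
    (hmono : AntitoneOn R (Set.Ici 1))
    (hnonneg : ∀ x ∈ Set.Ici (1 : ℝ), 0 ≤ R x)
    (hint : IntegrableOn R (Set.Ioi 1)) :
    (∫ p in {p : ℝ × ℝ | 1 ≤ max |p.1| |p.2|}, R (Real.sqrt (p.1 ^ 2 + p.2 ^ 2)))
        - 4 * (∫ x in Set.Ioi (1 : ℝ), R x) - 4 * R 1
      ≤ (∑' k : ℤ × ℤ, if k = 0 then 0 else R (Real.sqrt (ksq k))) ∧
    (∑' k : ℤ × ℤ, if k = 0 then 0 else R (Real.sqrt (ksq k)))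
      ≤ (∫ p in {p : ℝ × ℝ | 1 ≤ max |p.1| |p.2|}, R (Real.sqrt (p.1 ^ 2 + p.2 ^ 2)))
        + 4 * (∫ x in Set.Ioi (1 : ℝ), R x) + 4 * R 1 + 4 * R (Real.sqrt 2) := by
  classical
  set Q : ℝ → ℝ := fun x => R (max x 1) with hQdef
  have hQanti : Antitone Q := fun a b hab =>
    hmono (Set.mem_Ici.2 (le_max_right _ _)) (Set.mem_Ici.2 (le_max_right _ _))
      (max_le_max hab le_rfl)
  have hQeq : ∀ x, 1 ≤ x → Q x = R x := fun x hx => by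
    rw [hQdef]; simp only [max_eq_left hx]
  have hQ0 : ∀ x, 0 ≤ Q x := fun x => hnonneg _ (Set.mem_Ici.2 (le_max_right _ _))
  have hs2 : (1 : ℝ) ≤ Real.sqrt 2 := by
    rw [show (1 : ℝ) = Real.sqrt 1 by rw [Real.sqrt_one]]
    exact Real.sqrt_le_sqrt (by norm_num)
  have hQ1 : Q 1 = R 1 := hQeq 1 le_rfl
  have hQs2 : Q (Real.sqrt 2) = R (Real.sqrt 2) := hQeq _ hs2
  have hR1 : 0 ≤ R 1 := hnonneg 1 (Set.mem_Ici.2 le_rfl)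
  have hRs2 : 0 ≤ R (Real.sqrt 2) := hnonneg _ hs2
  have hIR : 0 ≤ ∫ x in Set.Ioi (1 : ℝ), R x :=
    setIntegral_nonneg measurableSet_Ioi fun x hx => hnonneg x (Set.mem_Ici.2 (le_of_lt hx))
  -- the ENNReal-level objects
  set T : ℝ≥0∞ := ∑' k : ℤ × ℤ, fE Q k with hTdef
  set L : ℝ≥0∞ := ∫⁻ p in Om, g Q p with hLdef
  have hI1R : I1 Q = ENNReal.ofReal (∫ x in Set.Ioi (1 : ℝ), R x) := by
    rw [I1]
    rw [setLIntegral_congr_fun measurableSet_Ioi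
      (fun x hx => by
        rw [hQeq x (le_of_lt (Set.mem_Ioi.1 hx))])]
    exact (ofReal_integral_eq_lintegral_ofReal hint
      ((ae_restrict_iff' measurableSet_Ioi).2
        (Filter.Eventually.of_forall fun x hx => hnonneg x (Set.mem_Ici.2 (le_of_lt hx))))).symm
  have hI1top : I1 Q ≠ ⊤ := by rw [hI1R]; exact ENNReal.ofReal_ne_top
  have hI1toReal : (I1 Q).toReal = ∫ x in Set.Ioi (1 : ℝ), R x := by
    rw [hI1R, ENNReal.toReal_ofReal hIR]
  -- relate F (real summand) with fE
  set F : ℤ × ℤ → ℝ := fun k => if k = 0 then 0 else R (Real.sqrt (ksq k)) with hFdef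
  have hF0 : ∀ k, 0 ≤ F k := by
    intro k
    by_cases hk : k = 0
    · simp [hFdef, hk]
    · simp only [hFdef, if_neg hk]
      exact hnonneg _ (one_le_sqrt_ksq hk)
  have hFeq : ∀ k, fE Q k = ENNReal.ofReal (F k) := by
    intro k
    by_cases hk : k = 0
    · simp [fE, hFdef, hk]
    · simp only [fE, hFdef, if_neg hk]
      rw [hQeq _ (one_le_sqrt_ksq hk)]
  -- relate the real integrand with g on Om
  have hGeq : Set.EqOn (fun p : ℝ × ℝ => R (Real.sqrt (p.1 ^ 2 + p.2 ^ 2)))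
      (fun p : ℝ × ℝ => Q (nrm p)) Om := by
    intro p hp
    exact (hQeq _ (one_le_nrm_of_mem_Om hp)).symm
  have hOmdef : ({p : ℝ × ℝ | 1 ≤ max |p.1| |p.2|} : Set (ℝ × ℝ)) = Om := rfl
  have hmeasg : Measurable fun p : ℝ × ℝ => Q (nrm p) := hQanti.measurable.comp measurable_nrm
  have hch1 : L ≤ T + 4 * I1 Q := chain1 hQanti
  have hch2 : T ≤ L + 4 * (ENNReal.ofReal (Q 1) + I1 Q) + 4 * ENNReal.ofReal (Q (Real.sqrt 2)) :=
    chain2 hQanti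
  by_cases hTfin : T = ⊤
  · -- degenerate case: everything diverges, both sides are junk 0
    have hLtop : L = ⊤ := by
      by_contra hL
      have : T ≠ ⊤ := by
        refine ne_top_of_le_ne_top ?_ hch2
        simp [hL, hI1top, ENNReal.add_ne_top, ENNReal.mul_ne_top, ENNReal.ofReal_ne_top]
      exact this hTfin
    have htsum0 : (∑' k : ℤ × ℤ, if k = 0 then 0 else R (Real.sqrt (ksq k))) = 0 := by
      refine tsum_eq_zero_of_not_summable fun hs => ?_
      have : T = ENNReal.ofReal (∑' k, F k) := by
        rw [ENNReal.ofReal_tsum_of_nonneg hF0 hs, hTdef]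
        exact tsum_congr hFeq
      rw [this] at hTfin
      exact ENNReal.ofReal_ne_top hTfin
    have hint0 : (∫ p in {p : ℝ × ℝ | 1 ≤ max |p.1| |p.2|}, R (Real.sqrt (p.1 ^ 2 + p.2 ^ 2))) = 0 := by
      rw [hOmdef]
      refine integral_undef fun hInt => ?_
      have hInt' : IntegrableOn (fun p : ℝ × ℝ => Q (nrm p)) Om :=
        (integrableOn_congr_fun hGeq measurableSet_Om).1 hInt
      exact absurd hLtop (ne_top_of_lt (show L < ⊤ from hInt'.lintegral_lt_top))
    rw [htsum0, hint0]
    constructor <;> nlinarith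
  · -- convergent case
    have hLfin : L ≠ ⊤ := by
      refine ne_top_of_le_ne_top ?_ hch1
      simp [hTfin, hI1top, ENNReal.add_ne_top, ENNReal.mul_ne_top]
    have hSummable : Summable F := by
      have := ENNReal.summable_toReal hTfin
      refine this.congr fun k => ?_
      rw [hFeq k, ENNReal.toReal_ofReal (hF0 k)]
    have htsumF : tsum F = T.toReal := by
      show (∑' k : ℤ × ℤ, F k) = T.toReal
      rw [hTdef, ENNReal.tsum_toReal_eq fun k => by rw [hFeq k]; exact ENNReal.ofReal_ne_top]
      exact tsum_congr fun k => by rw [hFeq k, ENNReal.toReal_ofReal (hF0 k)]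
    have hIntOm : ∫ p in {p : ℝ × ℝ | 1 ≤ max |p.1| |p.2|}, R (Real.sqrt (p.1 ^ 2 + p.2 ^ 2))
        = L.toReal := by
      rw [hOmdef, setIntegral_congr_fun measurableSet_Om hGeq]
      rw [integral_eq_lintegral_of_nonneg_ae
        (Filter.Eventually.of_forall fun p => hQ0 (nrm p))
        (hmeasg.aestronglyMeasurable)]
      rfl
    have h4 : ((4 : ℝ≥0∞)).toReal = (4 : ℝ) := by simp
    -- lower bound
    have hlow : L.toReal ≤ T.toReal + 4 * (I1 Q).toReal := by
      have h1 : (T + 4 * I1 Q) ≠ ⊤ := by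
        simp [hTfin, hI1top, ENNReal.add_ne_top, ENNReal.mul_ne_top]
      have := (ENNReal.toReal_le_toReal hLfin h1).2 hch1
      rwa [ENNReal.toReal_add hTfin (by simp [hI1top, ENNReal.mul_ne_top]),
        ENNReal.toReal_mul, h4] at this
    have hhigh : T.toReal ≤ L.toReal + 4 * (R 1 + (I1 Q).toReal) + 4 * R (Real.sqrt 2) := by
      have hc1 : (4 : ℝ≥0∞) * (ENNReal.ofReal (Q 1) + I1 Q) ≠ ⊤ := by
        simp [hI1top, ENNReal.add_ne_top, ENNReal.mul_ne_top, ENNReal.ofReal_ne_top]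
      have hc2 : (4 : ℝ≥0∞) * ENNReal.ofReal (Q (Real.sqrt 2)) ≠ ⊤ := by
        simp [ENNReal.mul_ne_top, ENNReal.ofReal_ne_top]
      have h1 : L + 4 * (ENNReal.ofReal (Q 1) + I1 Q) + 4 * ENNReal.ofReal (Q (Real.sqrt 2)) ≠ ⊤ :=
        ENNReal.add_ne_top.2 ⟨ENNReal.add_ne_top.2 ⟨hLfin, hc1⟩, hc2⟩
      have := (ENNReal.toReal_le_toReal hTfin h1).2 hch2
      rwa [ENNReal.toReal_add (ENNReal.add_ne_top.2 ⟨hLfin, hc1⟩) hc2,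
        ENNReal.toReal_add hLfin hc1, ENNReal.toReal_mul, ENNReal.toReal_mul,
        ENNReal.toReal_add ENNReal.ofReal_ne_top hI1top, h4,
        ENNReal.toReal_ofReal (hQ0 (Real.sqrt 2)), ENNReal.toReal_ofReal (hQ0 1),
        hQ1, hQs2] at this
    constructor
    · rw [hIntOm]
      rw [hI1toReal, ← htsumF] at hlow
      linarith
    · rw [hIntOm]
      rw [hI1toReal, ← htsumF] at hhigh
      linarith

end
end

section
/- The function h(μ) = Σ'_{k∈ℤ²∖{0}} (1+μ|k|²)^{−2} satisfies h(μ) = π/μ − 1 + O(e^{−(2−ε)π μ^{−1/2}}) as μ → 0⁺, for every ε > 0. -/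
open Real

noncomputable section

namespace HAux
open MeasureTheory Set

lemma le_exp_self {x : ℝ} (_hx : 0 ≤ x) : x ≤ exp x :=
  le_trans (by linarith) (Real.add_one_le_exp x)

lemma sq_le_two_mul_exp {x : ℝ} (hx : 0 ≤ x) : x ^ 2 ≤ 2 * exp x := by
  have := Real.quadratic_le_exp_of_nonneg hx
  nlinarith

lemma integrableOn_pow_mul_exp {r c : ℝ} (hr : 0 < r) (hc : 0 ≤ c) {k : ℕ}
    (hck : ∀ x : ℝ, 0 ≤ x → x ^ k ≤ c * exp x) :
    IntegrableOn (fun t : ℝ => t ^ k * exp (-(r * t))) (Ioi 0) := by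
  have hint : IntegrableOn (fun t : ℝ => (2 / r) ^ k * c * exp (-(r / 2) * t)) (Ioi 0) :=
    (exp_neg_integrableOn_Ioi 0 (by positivity)).const_mul _
  refine Integrable.mono' hint ?_ ?_
  · exact (Continuous.mul (continuous_pow k)
      (Real.continuous_exp.comp (by continuity))).aestronglyMeasurable
  · filter_upwards [ae_restrict_mem measurableSet_Ioi] with t ht
    have ht0 : (0:ℝ) < t := ht
    have h1 : ((r / 2) * t) ^ k ≤ c * exp ((r / 2) * t) := hck _ (by positivity)
    have hexp : exp (-(r * t)) = exp (-(r / 2) * t) * exp (-(r / 2) * t) := by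
      rw [← Real.exp_add]; congr 1; ring
    rw [Real.norm_eq_abs, abs_of_nonneg (by positivity)]
    have h3 : ((r / 2) * t) ^ k * exp (-(r / 2) * t) ≤ c := by
      have := mul_le_mul_of_nonneg_right h1 (Real.exp_pos (-(r/2)*t)).le
      rw [mul_assoc, ← Real.exp_add, show (r/2)*t + -(r/2)*t = 0 by ring,
        Real.exp_zero, mul_one] at this
      exact this
    have h2 : t ^ k * exp (-(r / 2) * t) ≤ (2 / r) ^ k * c := by
      have ht' : t ^ k = (2 / r) ^ k * ((r / 2) * t) ^ k := by
        rw [← mul_pow]; congr 1; field_simp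
      rw [ht', mul_assoc]
      exact mul_le_mul_of_nonneg_left h3 (by positivity)
    calc t ^ k * exp (-(r * t)) = t ^ k * exp (-(r/2)*t) * exp (-(r/2)*t) := by
          rw [hexp]; ring
      _ ≤ (2 / r) ^ k * c * exp (-(r / 2) * t) :=
          mul_le_mul_of_nonneg_right h2 (Real.exp_pos _).le

lemma integrableOn_exp_r {r : ℝ} (hr : 0 < r) :
    IntegrableOn (fun t : ℝ => exp (-(r * t))) (Ioi 0) := by
  simpa using integrableOn_pow_mul_exp (c := 1) hr zero_le_one
    (k := 0) (fun x hx => by simpa using Real.one_le_exp hx)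

lemma integrableOn_id_mul_exp {r : ℝ} (hr : 0 < r) :
    IntegrableOn (fun t : ℝ => t * exp (-(r * t))) (Ioi 0) := by
  simpa using integrableOn_pow_mul_exp (c := 1) hr zero_le_one
    (k := 1) (fun x hx => by simpa using le_exp_self hx)

lemma integrableOn_sq_mul_exp {r : ℝ} (hr : 0 < r) :
    IntegrableOn (fun t : ℝ => t ^ 2 * exp (-(r * t))) (Ioi 0) :=
  integrableOn_pow_mul_exp hr (by norm_num) (k := 2) (fun x hx => sq_le_two_mul_exp hx)

lemma integral_pow_mul_exp (k : ℕ) {r : ℝ} (hr : 0 < r) :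
    ∫ t : ℝ in Ioi 0, t ^ k * exp (-(r * t)) = k.factorial / r ^ (k + 1) := by
  have h := Real.integral_rpow_mul_exp_neg_mul_Ioi (a := (k + 1 : ℝ)) (by positivity) hr
  rw [show ((k:ℝ) + 1 - 1) = (k:ℝ) by ring] at h
  have hcong : ∫ t : ℝ in Ioi 0, t ^ (k:ℝ) * exp (-(r * t))
      = ∫ t : ℝ in Ioi 0, t ^ k * exp (-(r * t)) := by
    refine setIntegral_congr_fun measurableSet_Ioi (fun t ht => ?_)
    rw [Real.rpow_natCast]
  rw [hcong] at h
  rw [h, Real.Gamma_nat_eq_factorial k,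
    show ((k:ℝ) + 1) = ((k + 1 : ℕ) : ℝ) by push_cast; ring, Real.rpow_natCast,
    div_pow, one_pow]
  ring

lemma integral_exp_r {r : ℝ} (hr : 0 < r) :
    ∫ t : ℝ in Ioi 0, exp (-(r * t)) = 1 / r := by
  have := integral_pow_mul_exp 0 hr
  simpa using this

lemma integral_id_mul_exp {r : ℝ} (hr : 0 < r) :
    ∫ t : ℝ in Ioi 0, t * exp (-(r * t)) = 1 / r ^ 2 := by
  have := integral_pow_mul_exp 1 hr
  simpa using this

lemma integral_sq_mul_exp {r : ℝ} (hr : 0 < r) :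
    ∫ t : ℝ in Ioi 0, t ^ 2 * exp (-(r * t)) = 2 / r ^ 3 := by
  have := integral_pow_mul_exp 2 hr
  norm_num at this
  simpa using this

lemma nat_le_sq (n : ℕ) : (n:ℝ) ≤ (n:ℝ)^2 := by
  have : n ≤ n^2 := Nat.le_self_pow two_ne_zero n
  exact_mod_cast this

lemma summable_exp_nat_shift {s : ℝ} (hs : 0 < s) :
    Summable (fun n : ℕ => exp (-s * ((n:ℝ)+1)^2)) := by
  have hgeo : Summable (fun n : ℕ => exp (-s) * exp (-s) ^ n) :=
    (summable_geometric_of_lt_one (Real.exp_pos _).le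
      (Real.exp_lt_one_iff.mpr (by linarith))).mul_left _
  refine Summable.of_nonneg_of_le (fun n => (Real.exp_pos _).le) (fun n => ?_) hgeo
  have : exp (-s) * exp (-s) ^ n = exp ((((n:ℝ))+1) * (-s)) := by
    rw [← Real.exp_nat_mul, ← Real.exp_add]; congr 1; ring
  rw [this]
  apply Real.exp_le_exp.mpr
  have h1 : (1:ℝ) ≤ (n:ℝ)+1 := by have := Nat.cast_nonneg (α := ℝ) n; linarith
  nlinarith [hs.le, nat_le_sq n]

lemma summable_exp_nat {s : ℝ} (hs : 0 < s) :
    Summable (fun n : ℕ => exp (-s * (n:ℝ)^2)) := by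
  have hgeo : Summable (fun n : ℕ => exp (-s) ^ n) :=
    summable_geometric_of_lt_one (Real.exp_pos _).le (Real.exp_lt_one_iff.mpr (by linarith))
  refine Summable.of_nonneg_of_le (fun n => (Real.exp_pos _).le) (fun n => ?_) hgeo
  rw [← Real.exp_nat_mul]
  apply Real.exp_le_exp.mpr
  nlinarith [hs.le, nat_le_sq n, Nat.cast_nonneg (α := ℝ) n]

lemma summable_exp_int {s : ℝ} (hs : 0 < s) :
    Summable (fun n : ℤ => exp (-s * (n:ℝ)^2)) := by
  apply Summable.of_nat_of_neg_add_one
  · exact summable_exp_nat hs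
  · refine (summable_exp_nat_shift hs).congr (fun n => ?_)
    congr 2
    push_cast
    ring

lemma theta_split {s : ℝ} (hs : 0 < s) :
    ∑' n : ℤ, exp (-s * (n:ℝ)^2) = 1 + 2 * ∑' n : ℕ, exp (-s * ((n:ℝ)+1)^2) := by
  have h1' : Summable (fun n : ℕ => exp (-s * ((n:ℝ))^2)) := summable_exp_nat hs
  have h1 : Summable (fun n : ℕ => exp (-s * ((((n:ℕ):ℤ)):ℝ)^2)) :=
    h1'.congr (fun n => by norm_cast)
  have h2 : Summable (fun n : ℕ => exp (-s * (((-((n:ℕ)+1) : ℤ)):ℝ)^2)) :=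
    (summable_exp_nat_shift hs).congr (fun n => by
      rw [show (((-((n:ℕ)+1) : ℤ)):ℝ) = -((n:ℝ)+1) by push_cast; ring, neg_sq])
  calc (∑' n : ℤ, exp (-s * (n:ℝ)^2))
      = (∑' n : ℕ, exp (-s * ((((n:ℕ):ℤ)):ℝ)^2))
          + ∑' n : ℕ, exp (-s * (((-((n:ℕ)+1) : ℤ)):ℝ)^2) :=
        tsum_of_nat_of_neg_add_one (f := fun n : ℤ => exp (-s * (n:ℝ)^2)) h1 h2
    _ = (∑' n : ℕ, exp (-s * ((n:ℝ))^2)) + ∑' n : ℕ, exp (-s * ((n:ℝ)+1)^2) := by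
        have a1 : (∑' n : ℕ, exp (-s * ((((n:ℕ):ℤ)):ℝ)^2))
            = ∑' n : ℕ, exp (-s * ((n:ℝ))^2) :=
          tsum_congr (fun n => by norm_cast)
        have a2 : (∑' n : ℕ, exp (-s * (((-((n:ℕ)+1) : ℤ)):ℝ)^2))
            = ∑' n : ℕ, exp (-s * ((n:ℝ)+1)^2) :=
          tsum_congr (fun n => by
            rw [show (((-((n:ℕ)+1) : ℤ)):ℝ) = -((n:ℝ)+1) by push_cast; ring, neg_sq])
        rw [a1, a2]
    _ = 1 + 2 * ∑' n : ℕ, exp (-s * ((n:ℝ)+1)^2) := by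
        rw [Summable.tsum_eq_zero_add h1']
        have e0 : exp (-s * ((0:ℕ):ℝ)^2) = 1 := by norm_num
        have e1 : (∑' n : ℕ, exp (-s * (((n:ℕ)+1:ℕ):ℝ)^2))
            = ∑' n : ℕ, exp (-s * ((n:ℝ)+1)^2) :=
          tsum_congr (fun n => by norm_cast)
        rw [e0, e1]; ring

lemma theta_lower {s : ℝ} (hs : 0 < s) :
    1 ≤ ∑' n : ℤ, exp (-s * (n:ℝ)^2) := by
  rw [theta_split hs]
  have : 0 ≤ ∑' n : ℕ, exp (-s * ((n:ℝ)+1)^2) :=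
    tsum_nonneg (fun n => (Real.exp_pos _).le)
  linarith

lemma tail_bound {x : ℝ} (hx : 0 < x) :
    ∑' n : ℕ, exp (-x * ((n:ℝ)+1)^2) ≤ (1 + x⁻¹) * exp (-x) := by
  have hr0 : (0:ℝ) ≤ exp (-x) := (Real.exp_pos _).le
  have hr1 : exp (-x) < 1 := Real.exp_lt_one_iff.mpr (by linarith)
  have hgeo : Summable (fun n : ℕ => exp (-x) ^ n * exp (-x)) :=
    (summable_geometric_of_lt_one hr0 hr1).mul_right _
  have hle : ∑' n : ℕ, exp (-x * ((n:ℝ)+1)^2) ≤ ∑' n : ℕ, exp (-x) ^ n * exp (-x) := by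
    refine Summable.tsum_le_tsum (fun n => ?_) (summable_exp_nat_shift hx) hgeo
    have : exp (-x) ^ n * exp (-x) = exp ((((n:ℝ))+1) * (-x)) := by
      rw [← Real.exp_nat_mul, ← Real.exp_add]; congr 1; ring
    rw [this]
    apply Real.exp_le_exp.mpr
    have h1 : (1:ℝ) ≤ (n:ℝ)+1 := by have := Nat.cast_nonneg (α := ℝ) n; linarith
    nlinarith [hx.le, nat_le_sq n]
  have hsum : ∑' n : ℕ, exp (-x) ^ n * exp (-x) = (1 - exp (-x))⁻¹ * exp (-x) := by
    rw [tsum_mul_right, tsum_geometric_of_lt_one hr0 hr1]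
  have hbound : (1 - exp (-x))⁻¹ ≤ 1 + x⁻¹ := by
    have hex : exp (-x) ≤ (1+x)⁻¹ := by
      rw [Real.exp_neg]
      exact inv_anti₀ (by linarith) (by linarith [Real.add_one_le_exp x])
    have hx1 : (0:ℝ) < 1 + x := by linarith
    have hsum1 : (1+x)⁻¹ + x/(1+x) = 1 := by
      rw [inv_eq_one_div, ← add_div, add_comm 1 x, div_self (by linarith)]
    have h2 : x / (1+x) ≤ 1 - exp (-x) := by linarith
    have h3 : (0:ℝ) < x / (1+x) := by positivity
    calc (1 - exp (-x))⁻¹ ≤ (x / (1+x))⁻¹ := inv_anti₀ h3 h2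
      _ = 1 + x⁻¹ := by rw [inv_div]; field_simp; ring
  calc ∑' n : ℕ, exp (-x * ((n:ℝ)+1)^2) ≤ (1 - exp (-x))⁻¹ * exp (-x) := hle.trans hsum.le
    _ ≤ (1 + x⁻¹) * exp (-x) := mul_le_mul_of_nonneg_right hbound hr0

lemma theta_upper {s : ℝ} (hs : 0 < s) :
    ∑' n : ℤ, exp (-s * (n:ℝ)^2) ≤ 1 + 2 * ((1 + s⁻¹) * exp (-s)) := by
  rw [theta_split hs]
  have := tail_bound hs
  linarith

lemma jacobi {s : ℝ} (hs : 0 < s) :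
    ∑' n : ℤ, exp (-s * (n:ℝ)^2)
      = Real.sqrt (π / s) * ∑' n : ℤ, exp (-(π^2 / s) * (n:ℝ)^2) := by
  have hπ := Real.pi_pos
  have h := Real.tsum_exp_neg_mul_int_sq (a := s / π) (by positivity)
  have e0 : -π * (s/π) = -s := by field_simp
  have e2 : -π / (s/π) = -(π^2/s) := by
    rw [div_div_eq_mul_div]; ring
  rw [e0, e2] at h
  rw [h]
  congr 1
  rw [← Real.sqrt_eq_rpow, one_div, ← Real.sqrt_inv, inv_div]

lemma summable_inv_one_add_int {μ : ℝ} (hμ : 0 < μ) :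
    Summable (fun n : ℤ => (1 + μ * (n:ℝ)^2)⁻¹) := by
  have hbase : Summable (fun n : ℤ => μ⁻¹ * (1/(n:ℝ)^2) + (if n = 0 then 1 else 0)) := by
    apply Summable.add
    · exact (Summable.mul_left _ (by simpa using (summable_one_div_int_pow.mpr one_lt_two)))
    · exact summable_of_ne_finset_zero (s := {0}) (by intro n hn; simp at hn ⊢; exact hn)
  refine Summable.of_nonneg_of_le (fun n => by positivity) (fun n => ?_) hbase
  by_cases h : n = 0
  · subst h; simp
  · have h0 : (1:ℝ) ≤ |(n:ℝ)| := by
      have := Int.one_le_abs h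
      calc (1:ℝ) = ((1:ℤ):ℝ) := by norm_num
        _ ≤ ((|n|:ℤ):ℝ) := by exact_mod_cast this
        _ = |(n:ℝ)| := by push_cast; ring
    have hn : (1:ℝ) ≤ (n:ℝ)^2 := by nlinarith [sq_abs ((n:ℝ))]
    have h1 : (0:ℝ) < μ * (n:ℝ)^2 := by positivity
    have h2 : (1 + μ * (n:ℝ)^2)⁻¹ ≤ (μ * (n:ℝ)^2)⁻¹ :=
      inv_anti₀ h1 (by linarith)
    have h3 : (μ * (n:ℝ)^2)⁻¹ = μ⁻¹ * (1/(n:ℝ)^2) := by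
      rw [mul_inv]; ring
    rw [if_neg h, add_zero]
    linarith [h2.trans_eq h3]

lemma summable_inv_sq {μ : ℝ} (hμ : 0 < μ) :
    Summable (fun k : ℤ × ℤ => ((1 + μ * ksq k)^2)⁻¹) := by
  have hb : Summable (fun k : ℤ × ℤ => (1 + μ * (k.1:ℝ)^2)⁻¹ * (1 + μ * (k.2:ℝ)^2)⁻¹) :=
    Summable.mul_of_nonneg (f := fun n : ℤ => (1 + μ * (n:ℝ)^2)⁻¹)
      (g := fun n : ℤ => (1 + μ * (n:ℝ)^2)⁻¹)
      (summable_inv_one_add_int hμ) (summable_inv_one_add_int hμ)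
      (fun n => by positivity) (fun n => by positivity)
  refine Summable.of_nonneg_of_le (fun k => by positivity) (fun k => ?_) hb
  have h1 : (0:ℝ) ≤ μ * (k.1:ℝ)^2 := by positivity
  have h2 : (0:ℝ) ≤ μ * (k.2:ℝ)^2 := by positivity
  have hk : (1 + μ * ksq k)^2 ≥ (1 + μ * (k.1:ℝ)^2) * (1 + μ * (k.2:ℝ)^2) := by
    rw [ksq]; nlinarith
  have hpos : (0:ℝ) < (1 + μ * (k.1:ℝ)^2) * (1 + μ * (k.2:ℝ)^2) := by positivity
  exact (inv_anti₀ hpos hk).trans_eq (mul_inv _ _)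

lemma summable_prod_exp {s : ℝ} (hs : 0 < s) :
    Summable (fun k : ℤ × ℤ => exp (-s * (k.1:ℝ)^2) * exp (-s * (k.2:ℝ)^2)) :=
  Summable.mul_of_nonneg (f := fun n : ℤ => exp (-s * (n:ℝ)^2))
    (g := fun n : ℤ => exp (-s * (n:ℝ)^2))
    (summable_exp_int hs) (summable_exp_int hs)
    (fun n => (Real.exp_pos _).le) (fun n => (Real.exp_pos _).le)

/-- Step A: the 2D theta factorisation. -/
lemma tsum_twoD {μ t : ℝ} (hμ : 0 < μ) (ht : 0 < t) :
    ∑' k : ℤ × ℤ, t * exp (-((1 + μ * ksq k) * t))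
      = (t * exp (-t)) * (∑' n : ℤ, exp (-(t*μ) * (n:ℝ)^2))^2 := by
  have hs : 0 < t*μ := by positivity
  have hterm : ∀ k : ℤ × ℤ, t * exp (-((1 + μ * ksq k) * t))
      = (t * exp (-t)) * (exp (-(t*μ) * (k.1:ℝ)^2) * exp (-(t*μ) * (k.2:ℝ)^2)) := by
    intro k
    rw [ksq, show -((1 + μ * ((k.1:ℝ)^2 + (k.2:ℝ)^2)) * t)
      = -t + (-(t*μ) * (k.1:ℝ)^2 + -(t*μ) * (k.2:ℝ)^2) by ring,
      Real.exp_add, Real.exp_add]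
    ring
  calc ∑' k : ℤ × ℤ, t * exp (-((1 + μ * ksq k) * t))
      = ∑' k : ℤ × ℤ, (t * exp (-t)) * (exp (-(t*μ) * (k.1:ℝ)^2) * exp (-(t*μ) * (k.2:ℝ)^2)) :=
        tsum_congr hterm
    _ = (t * exp (-t)) * ∑' k : ℤ × ℤ, exp (-(t*μ) * (k.1:ℝ)^2) * exp (-(t*μ) * (k.2:ℝ)^2) :=
        tsum_mul_left
    _ = (t * exp (-t)) * (∑' n : ℤ, exp (-(t*μ) * (n:ℝ)^2))^2 := by
        congr 1
        have hp := summable_prod_exp hs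
        rw [Summable.tsum_prod hp]
        have hinner : ∀ i : ℤ, (∑' j : ℤ, exp (-(t*μ) * (i:ℝ)^2) * exp (-(t*μ) * (j:ℝ)^2))
            = exp (-(t*μ) * (i:ℝ)^2) * ∑' j : ℤ, exp (-(t*μ) * (j:ℝ)^2) := fun i => tsum_mul_left
        rw [tsum_congr hinner, tsum_mul_right, sq]

lemma theta_sq {s : ℝ} (hs : 0 < s) :
    (∑' n : ℤ, exp (-s * (n:ℝ)^2))^2
      = (π/s) * (∑' n : ℤ, exp (-(π^2/s) * (n:ℝ)^2))^2 := by
  rw [jacobi hs, mul_pow, Real.sq_sqrt (by positivity)]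

lemma term_eq {μ t : ℝ} (k : ℤ × ℤ) :
    t * exp (-((1 + μ * ksq k) * t))
      = (t * exp (-t)) * (exp (-(t*μ) * (k.1:ℝ)^2) * exp (-(t*μ) * (k.2:ℝ)^2)) := by
  rw [ksq, show -((1 + μ * ((k.1:ℝ)^2 + (k.2:ℝ)^2)) * t)
    = -t + (-(t*μ) * (k.1:ℝ)^2 + -(t*μ) * (k.2:ℝ)^2) by ring,
    Real.exp_add, Real.exp_add]
  ring

lemma summable_term {μ t : ℝ} (hs : 0 < t*μ) :
    Summable (fun k : ℤ × ℤ => t * exp (-((1 + μ * ksq k) * t))) :=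
  ((summable_prod_exp hs).mul_left (t * exp (-t))).congr (fun k => (term_eq k).symm)

lemma mu_bound {c μ : ℝ} (hc : 0 < c) (hμ : 0 < μ) :
    μ⁻¹ * exp (-(c / Real.sqrt μ)) ≤ 4 / c^2 := by
  set y := Real.sqrt μ with hy
  have hy0 : 0 < y := Real.sqrt_pos.mpr hμ
  have hμy : μ = y^2 := (Real.sq_sqrt hμ.le).symm
  have hz : 0 < c / y := by positivity
  have hexp : (c/y)^2/2 ≤ exp (c/y) := by nlinarith [Real.quadratic_le_exp_of_nonneg hz.le]
  have h1 : exp (-(c/y)) ≤ 2 * y^2 / c^2 := by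
    rw [Real.exp_neg]
    have h2 : (0:ℝ) < (c/y)^2/2 := by positivity
    calc (exp (c/y))⁻¹ ≤ ((c/y)^2/2)⁻¹ := inv_anti₀ h2 hexp
      _ = 2 * y^2/c^2 := by field_simp
  calc μ⁻¹ * exp (-(c/y)) ≤ μ⁻¹ * (2*y^2/c^2) := mul_le_mul_of_nonneg_left h1 (by positivity)
    _ = 2 / c^2 := by rw [hμy]; field_simp
    _ ≤ 4 / c^2 := by gcongr; norm_num

end HAux

set_option maxHeartbeats 2000000 in
open HAux MeasureTheory Set in
/-- Asymptotics of `h(μ) = Σ'_{k≠0} (1+μ|k|²)^{-2}`: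
`h(μ) = π/μ − 1 + O(e^{−(2−ε)π/√μ})` as `μ → 0⁺`, for every `ε ∈ (0,2)`. -/
theorem hSum_asymptotics (ε : ℝ) (hε0 : 0 < ε) (hε2 : ε < 2) :
    ∃ C μ₀ : ℝ, 0 < C ∧ 0 < μ₀ ∧ ∀ μ : ℝ, 0 < μ → μ < μ₀ →
      |(∑' k : ℤ × ℤ, if k = 0 then 0 else ((1 + μ * ksq k) ^ 2)⁻¹) - π / μ + 1|
        ≤ C * Real.exp (-(2 - ε) * π / Real.sqrt μ) := by
  have hπ := Real.pi_pos
  set δ : ℝ := ε/4 with hδdef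
  have hδ0 : 0 < δ := by rw [hδdef]; positivity
  set K : ℝ := 1/δ + 2/δ^2 + 2/δ^3 with hKdef
  have hK0 : 0 < K := by rw [hKdef]; positivity
  refine ⟨128*K/(ε^2*π) + 1, 1, by positivity, one_pos, ?_⟩
  intro μ hμ0 hμ1
  have hsqrtμ : 0 < Real.sqrt μ := Real.sqrt_pos.mpr hμ0
  set R : ℝ → ℝ := fun t => (∑' n : ℤ, exp (-(π^2/(t*μ)) * (n:ℝ)^2)) - 1 with hR
  set q : ℝ → ℝ := fun t => 2 * R t + (R t)^2 with hq
  have hS : Summable (fun k : ℤ × ℤ => ((1 + μ * ksq k) ^ 2)⁻¹) := summable_inv_sq hμ0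
  set S : ℝ := ∑' k : ℤ × ℤ, ((1 + μ * ksq k) ^ 2)⁻¹ with hSdef
  have hT : (∑' k : ℤ × ℤ, if k = 0 then 0 else ((1 + μ * ksq k) ^ 2)⁻¹) = S - 1 := by
    have h0 := Summable.tsum_eq_add_tsum_ite hS 0
    have h00 : ((1 + μ * ksq (0:ℤ×ℤ)) ^ 2)⁻¹ = 1 := by
      norm_num [ksq]
    rw [h00] at h0
    rw [← hSdef] at h0
    linarith
  have hksq : ∀ k : ℤ × ℤ, 0 ≤ ksq k := fun k => by rw [ksq]; positivity
  have ha : ∀ k : ℤ × ℤ, 0 < 1 + μ * ksq k := fun k => by nlinarith [hksq k]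
  -- the error term as a lower Lebesgue integral
  set A : ENNReal := ∫⁻ t in Ioi (0:ℝ), ENNReal.ofReal (π/μ * exp (-t) * q t) with hA
  -- Key identity via Tonelli + Poisson/Jacobi
  have key : ENNReal.ofReal S = ENNReal.ofReal (π/μ) + A := by
    have h1 : ∀ k : ℤ × ℤ, ENNReal.ofReal (((1 + μ * ksq k) ^ 2)⁻¹)
        = ∫⁻ t in Ioi (0:ℝ), ENNReal.ofReal (t * exp (-((1 + μ * ksq k) * t))) := by
      intro k
      have hint := integrableOn_id_mul_exp (ha k)
      have hnn : 0 ≤ᵐ[volume.restrict (Ioi (0:ℝ))]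
          fun t => t * exp (-((1 + μ * ksq k) * t)) := by
        filter_upwards [ae_restrict_mem measurableSet_Ioi] with t ht
        exact mul_nonneg (le_of_lt ht) (Real.exp_pos _).le
      rw [← MeasureTheory.ofReal_integral_eq_lintegral_ofReal hint hnn,
        integral_id_mul_exp (ha k), one_div]
    have h2 : ENNReal.ofReal S = ∑' k : ℤ × ℤ, ENNReal.ofReal (((1 + μ * ksq k) ^ 2)⁻¹) :=
      ENNReal.ofReal_tsum_of_nonneg (fun k => inv_nonneg.mpr (sq_nonneg _)) hS
    have h3 : (∑' k : ℤ × ℤ, ∫⁻ t in Ioi (0:ℝ),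
          ENNReal.ofReal (t * exp (-((1 + μ * ksq k) * t))))
        = ∫⁻ t in Ioi (0:ℝ), ∑' k : ℤ × ℤ,
            ENNReal.ofReal (t * exp (-((1 + μ * ksq k) * t))) := by
      refine (MeasureTheory.lintegral_tsum (fun k => ?_)).symm
      have hcont : Continuous fun t : ℝ => t * exp (-((1 + μ * ksq k) * t)) := by
        continuity
      exact (hcont.measurable.ennreal_ofReal).aemeasurable
    have h4 : ∀ᵐ t ∂(volume.restrict (Ioi (0:ℝ))),
        (∑' k : ℤ × ℤ, ENNReal.ofReal (t * exp (-((1 + μ * ksq k) * t))))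
          = ENNReal.ofReal (π/μ * exp (-t)) + ENNReal.ofReal (π/μ * exp (-t) * q t) := by
      filter_upwards [ae_restrict_mem measurableSet_Ioi] with t ht
      have ht0 : (0:ℝ) < t := ht
      have hs : 0 < t*μ := by positivity
      have hx : 0 < π^2/(t*μ) := by positivity
      have hsum := summable_term (μ := μ) (t := t) hs
      rw [← ENNReal.ofReal_tsum_of_nonneg
        (fun k => mul_nonneg ht0.le (Real.exp_pos _).le) hsum]
      have hR0 : 0 ≤ R t := by
        have := theta_lower hx
        rw [hR]; simp only; linarith
      have hq0 : 0 ≤ q t := by rw [hq]; simp only; nlinarith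
      have hreal : (∑' k : ℤ × ℤ, t * exp (-((1 + μ * ksq k) * t)))
          = π/μ * exp (-t) + π/μ * exp (-t) * q t := by
        rw [tsum_twoD hμ0 ht0, theta_sq hs]
        have hθ2 : (∑' n : ℤ, exp (-(π^2/(t*μ)) * (n:ℝ)^2)) = 1 + R t := by
          rw [hR]; ring
        rw [hθ2, hq]
        simp only
        field_simp
        ring
      rw [hreal, ENNReal.ofReal_add (by positivity) (mul_nonneg (by positivity) hq0)]
    calc ENNReal.ofReal S
        = ∑' k : ℤ × ℤ, ENNReal.ofReal (((1 + μ * ksq k) ^ 2)⁻¹) := h2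
      _ = ∑' k : ℤ × ℤ, ∫⁻ t in Ioi (0:ℝ),
            ENNReal.ofReal (t * exp (-((1 + μ * ksq k) * t))) := tsum_congr h1
      _ = ∫⁻ t in Ioi (0:ℝ), ∑' k : ℤ × ℤ,
            ENNReal.ofReal (t * exp (-((1 + μ * ksq k) * t))) := h3
      _ = ∫⁻ t in Ioi (0:ℝ),
            (ENNReal.ofReal (π/μ * exp (-t)) + ENNReal.ofReal (π/μ * exp (-t) * q t)) :=
          lintegral_congr_ae h4
      _ = (∫⁻ t in Ioi (0:ℝ), ENNReal.ofReal (π/μ * exp (-t))) + A := by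
          rw [hA]
          refine lintegral_add_left ?_ _
          exact ((continuous_const.mul (Real.continuous_exp.comp
            continuous_neg)).measurable).ennreal_ofReal
      _ = ENNReal.ofReal (π/μ) + A := by
          congr 1
          have hint1 : IntegrableOn (fun t : ℝ => π/μ * exp (-t)) (Ioi 0) := by
            have h := (integrableOn_exp_r (r := 1) one_pos).const_mul (π/μ)
            simp only [one_mul] at h; exact h
          have hnn1 : 0 ≤ᵐ[volume.restrict (Ioi (0:ℝ))] fun t : ℝ => π/μ * exp (-t) :=
            Filter.Eventually.of_forall (fun t => by positivity)
          rw [← MeasureTheory.ofReal_integral_eq_lintegral_ofReal hint1 hnn1]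
          congr 1
          rw [MeasureTheory.integral_const_mul]
          have h := integral_exp_r (r := 1) one_pos
          simp only [one_mul] at h
          rw [h]
          norm_num
  -- Bound on A
  set c0 : ℝ := 8*π/μ * exp (-(2-2*δ)*π/Real.sqrt μ) with hc0
  have hc00 : 0 < c0 := by rw [hc0]; positivity
  set u : ℝ := μ/π^2 with hu
  have hu0 : 0 < u := by rw [hu]; positivity
  have hu1 : u ≤ 1 := by
    rw [hu, div_le_one (by positivity)]
    nlinarith [Real.pi_gt_three]
  have hA_le : A ≤ ENNReal.ofReal (c0 * K) := by
    have hG : ∀ t ∈ Ioi (0:ℝ),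
        π/μ * exp (-t) * q t ≤ c0 * ((1 + u*t)^2 * exp (-(δ*t))) := by
      intro t ht
      have ht0 : (0:ℝ) < t := ht
      have hs : 0 < t*μ := by positivity
      set x : ℝ := π^2/(t*μ) with hxdef
      have hx : 0 < x := by rw [hxdef]; positivity
      have hxinv : x⁻¹ = u*t := by
        rw [hxdef, hu, inv_div]; field_simp
      have hRle : R t ≤ 2*(1+x⁻¹)*exp (-x) := by
        have := theta_upper hx
        rw [hR]; simp only; rw [← hxdef]; linarith
      have hR0 : 0 ≤ R t := by
        have := theta_lower hx
        rw [hR]; simp only; rw [← hxdef]; linarith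
      have hE1 : exp (-x) ≤ 1 := Real.exp_le_one_iff.mpr (by linarith)
      have hE0 : 0 < exp (-x) := Real.exp_pos _
      have hv0 : 0 ≤ x⁻¹ := by positivity
      have hRle2 : R t ≤ 2*(1+x⁻¹) := by nlinarith
      have hq_le : q t ≤ 8*(1+x⁻¹)^2 * exp (-x) := by
        rw [hq]; simp only
        have hRsq : (R t)^2 ≤ (2*(1+x⁻¹)) * (2*(1+x⁻¹)*exp (-x)) := by
          rw [sq]
          apply mul_le_mul hRle2 hRle hR0 (by positivity)
        nlinarith
      have hMG : exp (-t) * exp (-x) ≤ exp (-(2-2*δ)*π/Real.sqrt μ) * exp (-(δ*t)) := by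
        rw [← Real.exp_add, ← Real.exp_add]
        apply Real.exp_le_exp.mpr
        have htx : t * x = π^2/μ := by rw [hxdef]; field_simp
        have hAM : 2*(π/Real.sqrt μ) ≤ t + x := by
          have h1 : Real.sqrt t * Real.sqrt x = Real.sqrt (t*x) := (Real.sqrt_mul ht0.le x).symm
          have h2 : Real.sqrt (t*x) = π/Real.sqrt μ := by
            rw [htx, show π^2/μ = (π/Real.sqrt μ)^2 by
              rw [div_pow, Real.sq_sqrt hμ0.le], Real.sqrt_sq (by positivity)]
          nlinarith [sq_nonneg (Real.sqrt t - Real.sqrt x), Real.sq_sqrt ht0.le,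
            Real.sq_sqrt hx.le, h1, h2]
        have hδx : 0 ≤ δ * x := by positivity
        have hδ1 : δ < 1 := by rw [hδdef]; linarith
        have hrw : -(2-2*δ)*π/Real.sqrt μ = -((2-2*δ)*(π/Real.sqrt μ)) := by
          rw [neg_mul, neg_div, mul_div_assoc]
        rw [hrw]
        nlinarith [mul_le_mul_of_nonneg_left hAM (by linarith : (0:ℝ) ≤ 1-δ)]
      calc π/μ * exp (-t) * q t
          ≤ π/μ * exp (-t) * (8*(1+x⁻¹)^2 * exp (-x)) := by
            apply mul_le_mul_of_nonneg_left hq_le (by positivity)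
        _ = 8*π/μ * (1+x⁻¹)^2 * (exp (-t) * exp (-x)) := by ring
        _ ≤ 8*π/μ * (1+x⁻¹)^2 * (exp (-(2-2*δ)*π/Real.sqrt μ) * exp (-(δ*t))) := by
            apply mul_le_mul_of_nonneg_left hMG (by positivity)
        _ = c0 * ((1 + u*t)^2 * exp (-(δ*t))) := by
            rw [hxinv, hc0]; ring
    have hH : IntegrableOn (fun t : ℝ =>
        exp (-(δ*t)) + (2*u)*(t*exp (-(δ*t))) + u^2*(t^2*exp (-(δ*t)))) (Ioi 0) :=
      ((integrableOn_exp_r hδ0).add ((integrableOn_id_mul_exp hδ0).const_mul (2*u))).add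
        ((integrableOn_sq_mul_exp hδ0).const_mul (u^2))
    have hGeq : (fun t : ℝ => c0 * ((1 + u*t)^2 * exp (-(δ*t))))
        = fun t : ℝ => c0 * (exp (-(δ*t)) + (2*u)*(t*exp (-(δ*t))) + u^2*(t^2*exp (-(δ*t)))) :=
      funext (fun t => by ring)
    have hGint : IntegrableOn (fun t : ℝ => c0 * ((1 + u*t)^2 * exp (-(δ*t)))) (Ioi 0) := by
      rw [hGeq]; exact hH.const_mul c0
    have hGnn : 0 ≤ᵐ[volume.restrict (Ioi (0:ℝ))]
        fun t : ℝ => c0 * ((1 + u*t)^2 * exp (-(δ*t))) := by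
      filter_upwards [ae_restrict_mem measurableSet_Ioi] with t ht
      have : (0:ℝ) < t := ht
      positivity
    have hIntval : ∫ t in Ioi (0:ℝ), c0 * ((1 + u*t)^2 * exp (-(δ*t)))
        = c0 * (1/δ + 2*u*(1/δ^2) + u^2*(2/δ^3)) := by
      rw [hGeq, MeasureTheory.integral_const_mul]
      congr 1
      have i1 : IntegrableOn (fun t : ℝ => exp (-(δ*t))) (Ioi 0) := integrableOn_exp_r hδ0
      have i2 : IntegrableOn (fun t : ℝ => (2*u)*(t*exp (-(δ*t)))) (Ioi 0) :=
        (integrableOn_id_mul_exp hδ0).const_mul (2*u)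
      have i3 : IntegrableOn (fun t : ℝ => u^2*(t^2*exp (-(δ*t)))) (Ioi 0) :=
        (integrableOn_sq_mul_exp hδ0).const_mul (u^2)
      have i12 : IntegrableOn (fun t : ℝ =>
          exp (-(δ*t)) + (2*u)*(t*exp (-(δ*t)))) (Ioi 0) := i1.add i2
      rw [MeasureTheory.integral_add i12 i3, MeasureTheory.integral_add i1 i2,
        MeasureTheory.integral_const_mul, MeasureTheory.integral_const_mul,
        integral_exp_r hδ0, integral_id_mul_exp hδ0, integral_sq_mul_exp hδ0]
    have hIle : c0 * (1/δ + 2*u*(1/δ^2) + u^2*(2/δ^3)) ≤ c0 * K := by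
      apply mul_le_mul_of_nonneg_left _ hc00.le
      rw [hKdef]
      have h2 : u^2 ≤ 1 := by nlinarith
      have hd1 : 0 < 1/δ^2 := by positivity
      have hd2 : 0 < 1/δ^3 := by positivity
      have e1 : 2*u*(1/δ^2) ≤ 2/δ^2 := by
        rw [div_eq_mul_one_div 2 (δ^2)]
        nlinarith
      have e2 : u^2*(2/δ^3) ≤ 2/δ^3 := by
        nlinarith [show (0:ℝ) < 2/δ^3 by positivity]
      linarith
    calc A ≤ ∫⁻ t in Ioi (0:ℝ), ENNReal.ofReal (c0 * ((1 + u*t)^2 * exp (-(δ*t)))) := by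
          rw [hA]
          exact setLIntegral_mono' measurableSet_Ioi
            (fun t ht => ENNReal.ofReal_le_ofReal (hG t ht))
      _ = ENNReal.ofReal (∫ t in Ioi (0:ℝ), c0 * ((1 + u*t)^2 * exp (-(δ*t)))) :=
          (MeasureTheory.ofReal_integral_eq_lintegral_ofReal hGint hGnn).symm
      _ ≤ ENNReal.ofReal (c0 * K) := by
          rw [hIntval]
          exact ENNReal.ofReal_le_ofReal hIle
  -- Extract real statement
  have hAtop : A ≠ ⊤ := (hA_le.trans_lt ENNReal.ofReal_lt_top).ne
  set a : ℝ := A.toReal with hadef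
  have hAa : A = ENNReal.ofReal a := (ENNReal.ofReal_toReal hAtop).symm
  have ha0 : 0 ≤ a := ENNReal.toReal_nonneg
  have hSval : S = π/μ + a := by
    have hkey := key
    rw [hAa, ← ENNReal.ofReal_add (by positivity) ha0] at hkey
    have hS0 : 0 ≤ S := tsum_nonneg (fun k => inv_nonneg.mpr (sq_nonneg _))
    exact (ENNReal.ofReal_eq_ofReal_iff hS0 (by positivity)).mp hkey
  have haB : a ≤ c0 * K := by
    rw [hAa] at hA_le
    exact (ENNReal.ofReal_le_ofReal_iff (by positivity)).mp hA_le
  -- Final numeric estimate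
  rw [hT, hSval, show π/μ + a - 1 - π/μ + 1 = a by ring, abs_of_nonneg ha0]
  have hsplit : exp (-(2-2*δ)*π/Real.sqrt μ)
      = exp (-((ε/2)*π)/Real.sqrt μ) * exp (-(2-ε)*π/Real.sqrt μ) := by
    rw [← Real.exp_add, ← add_div]
    congr 1
    rw [hδdef]; ring
  have hfac : μ⁻¹ * exp (-((ε/2)*π)/Real.sqrt μ) ≤ 16/(ε^2*π^2) := by
    have hmb := mu_bound (c := (ε/2)*π) (by positivity) hμ0
    rw [← neg_div] at hmb
    have heq : 4/((ε/2)*π)^2 = 16/(ε^2*π^2) := by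
      rw [show ((ε/2)*π)^2 = ε^2*π^2/4 by ring, div_div_eq_mul_div]
      norm_num
    rw [heq] at hmb
    exact hmb
  calc a ≤ c0 * K := haB
    _ = (8*π*K) * (μ⁻¹ * exp (-((ε/2)*π)/Real.sqrt μ)) * exp (-(2-ε)*π/Real.sqrt μ) := by
        rw [hc0, hsplit]; ring
    _ ≤ (8*π*K) * (16/(ε^2*π^2)) * exp (-(2-ε)*π/Real.sqrt μ) := by
        apply mul_le_mul_of_nonneg_right _ (Real.exp_pos _).le
        exact mul_le_mul_of_nonneg_left hfac (by positivity)
    _ ≤ (128*K/(ε^2*π) + 1) * Real.exp (-(2 - ε) * π / Real.sqrt μ) := by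
        apply mul_le_mul_of_nonneg_right _ (Real.exp_pos _).le
        have : (8*π*K) * (16/(ε^2*π^2)) = 128*K/(ε^2*π) := by
          field_simp; ring
        rw [this]
        linarith

end
end

section
/- The limit β := lim_{N→∞} ( Σ'_{0<|k|≤N, k∈ℤ²} 1/|k|² − 2π log N ) exists and is finite. -/
open Real Filter
open scoped Classical Topology

noncomputable section

open MeasureTheory Set

namespace TwoD

/-- squared Euclidean norm on `ℝ × ℝ`. -/
def nsq (x : ℝ × ℝ) : ℝ := x.1 ^ 2 + x.2 ^ 2

lemma nsq_nonneg (x : ℝ × ℝ) : 0 ≤ nsq x := by unfold nsq; positivity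

lemma ksq_nonneg (k : ℤ × ℤ) : 0 ≤ ksq k := by unfold ksq; positivity

lemma continuous_nsq : Continuous nsq := by
  unfold nsq; fun_prop

/-- the function `1/|x|²`. -/
def gg (x : ℝ × ℝ) : ℝ := (nsq x)⁻¹

lemma gg_nonneg (x : ℝ × ℝ) : 0 ≤ gg x := inv_nonneg.2 (nsq_nonneg x)

lemma measurable_gg : Measurable gg := continuous_nsq.measurable.inv

/-- unit square centered at the lattice point `k`. -/
def Q (k : ℤ × ℤ) : Set (ℝ × ℝ) :=
  Ioc ((k.1 : ℝ) - 1/2) ((k.1 : ℝ) + 1/2) ×ˢ Ioc ((k.2 : ℝ) - 1/2) ((k.2 : ℝ) + 1/2)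

lemma measurableSet_Q (k : ℤ × ℤ) : MeasurableSet (Q k) :=
  measurableSet_Ioc.prod measurableSet_Ioc

lemma volume_Q (k : ℤ × ℤ) : volume (Q k) = 1 := by
  rw [Q, Measure.volume_eq_prod, Measure.prod_prod, Real.volume_Ioc, Real.volume_Ioc]
  rw [show ((k.1 : ℝ) + 1/2) - ((k.1 : ℝ) - 1/2) = 1 by ring,
      show ((k.2 : ℝ) + 1/2) - ((k.2 : ℝ) - 1/2) = 1 by ring]
  simp

lemma exists_mem_Q (x : ℝ × ℝ) : ∃ k : ℤ × ℤ, x ∈ Q k := by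
  refine ⟨(⌈x.1 - 1/2⌉, ⌈x.2 - 1/2⌉), ?_, ?_⟩ <;>
  · constructor
    · push_cast
      have := Int.ceil_lt_add_one (x.1 - 1/2)
      have := Int.ceil_lt_add_one (x.2 - 1/2)
      first
        | (show (⌈x.1 - 1/2⌉ : ℝ) - 1/2 < x.1; linarith)
        | (show (⌈x.2 - 1/2⌉ : ℝ) - 1/2 < x.2; linarith)
    · push_cast
      have := Int.le_ceil (x.1 - 1/2)
      have := Int.le_ceil (x.2 - 1/2)
      first
        | (show x.1 ≤ (⌈x.1 - 1/2⌉ : ℝ) + 1/2; linarith)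
        | (show x.2 ≤ (⌈x.2 - 1/2⌉ : ℝ) + 1/2; linarith)

lemma Q_disjoint {k l : ℤ × ℤ} (h : k ≠ l) : Disjoint (Q k) (Q l) := by
  rw [Set.disjoint_left]
  rintro x ⟨h11, h12⟩ ⟨h21, h22⟩
  apply h
  have e1 : k.1 = l.1 := by
    have a1 := h11.1; have a2 := h11.2; have b1 := h21.1; have b2 := h21.2
    have : ((k.1 : ℝ) - l.1 < 1) ∧ ((l.1 : ℝ) - k.1 < 1) := by constructor <;> linarith
    have h1 : (k.1 : ℝ) < l.1 + 1 := by linarith [this.1]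
    have h2 : (l.1 : ℝ) < k.1 + 1 := by linarith [this.2]
    have h1' : k.1 < l.1 + 1 := by exact_mod_cast h1
    have h2' : l.1 < k.1 + 1 := by exact_mod_cast h2
    omega
  have e2 : k.2 = l.2 := by
    have a1 := h12.1; have a2 := h12.2; have b1 := h22.1; have b2 := h22.2
    have h1 : (k.2 : ℝ) < l.2 + 1 := by linarith
    have h2 : (l.2 : ℝ) < k.2 + 1 := by linarith
    have h1' : k.2 < l.2 + 1 := by exact_mod_cast h1
    have h2' : l.2 < k.2 + 1 := by exact_mod_cast h2
    omega
  exact Prod.ext e1 e2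

lemma abs_int_le_sqrt_ksq_fst (k : ℤ × ℤ) : |(k.1 : ℝ)| ≤ Real.sqrt (ksq k) := by
  rw [← Real.sqrt_sq_eq_abs]
  exact Real.sqrt_le_sqrt (le_add_of_nonneg_right (sq_nonneg _))

lemma abs_int_le_sqrt_ksq_snd (k : ℤ × ℤ) : |(k.2 : ℝ)| ≤ Real.sqrt (ksq k) := by
  rw [← Real.sqrt_sq_eq_abs]
  exact Real.sqrt_le_sqrt (le_add_of_nonneg_left (sq_nonneg _))

lemma abs_nsq_sub (k : ℤ × ℤ) {x : ℝ × ℝ} (hx : x ∈ Q k) :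
    |nsq x - ksq k| ≤ 2 * Real.sqrt (ksq k) + 1/2 := by
  obtain ⟨⟨h11, h12⟩, ⟨h21, h22⟩⟩ := hx
  have ha := abs_int_le_sqrt_ksq_fst k
  have hb := abs_int_le_sqrt_ksq_snd k
  have ha' := abs_le.1 ha
  have hb' := abs_le.1 hb
  have e : nsq x - ksq k = (x.1 - k.1) * (x.1 + k.1) + (x.2 - k.2) * (x.2 + k.2) := by
    simp only [nsq, ksq]; ring
  rw [e]
  have s1 : |(x.1 - k.1) * (x.1 + k.1)| ≤ (1/2) * (2 * Real.sqrt (ksq k) + 1/2) := by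
    rw [abs_mul]
    apply mul_le_mul (by rw [abs_le]; constructor <;> linarith)
      (by rw [abs_le]; constructor <;> linarith) (abs_nonneg _)
    norm_num
  have s2 : |(x.2 - k.2) * (x.2 + k.2)| ≤ (1/2) * (2 * Real.sqrt (ksq k) + 1/2) := by
    rw [abs_mul]
    apply mul_le_mul (by rw [abs_le]; constructor <;> linarith)
      (by rw [abs_le]; constructor <;> linarith) (abs_nonneg _)
    norm_num
  calc |(x.1 - k.1) * (x.1 + k.1) + (x.2 - k.2) * (x.2 + k.2)|
      ≤ |(x.1 - k.1) * (x.1 + k.1)| + |(x.2 - k.2) * (x.2 + k.2)| := abs_add_le _ _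
    _ ≤ (1/2) * (2 * Real.sqrt (ksq k) + 1/2) + (1/2) * (2 * Real.sqrt (ksq k) + 1/2) := by
        linarith
    _ ≤ 2 * Real.sqrt (ksq k) + 1/2 := by linarith [Real.sqrt_nonneg (ksq k)]

lemma sqrt_ksq_ge {k : ℤ × ℤ} (hk : 36 ≤ ksq k) : 6 ≤ Real.sqrt (ksq k) := by
  rw [show (6 : ℝ) = Real.sqrt 36 by
    rw [show (36 : ℝ) = 6 ^ 2 by norm_num, Real.sqrt_sq (by norm_num)]]
  exact Real.sqrt_le_sqrt hk

lemma sq_sqrt_ksq (k : ℤ × ℤ) : Real.sqrt (ksq k) ^ 2 = ksq k :=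
  Real.sq_sqrt (ksq_nonneg k)

lemma nsq_lower {k : ℤ × ℤ} (hk : 36 ≤ ksq k) {x : ℝ × ℝ} (hx : x ∈ Q k) :
    ksq k / 2 ≤ nsq x := by
  have h := (abs_le.1 (abs_nsq_sub k hx)).1
  have hs := sqrt_ksq_ge hk
  have hsq := sq_sqrt_ksq k
  nlinarith

lemma integrableOn_gg_Q {k : ℤ × ℤ} (hk : 36 ≤ ksq k) : IntegrableOn gg (Q k) := by
  apply Measure.integrableOn_of_bounded (M := 2 / ksq k)
  · rw [volume_Q]; exact ENNReal.one_ne_top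
  · exact measurable_gg.aestronglyMeasurable
  · filter_upwards [ae_restrict_mem (measurableSet_Q k)] with x hx
    have h2 := nsq_lower hk hx
    have hpos : 0 < nsq x := by linarith
    rw [Real.norm_eq_abs, abs_of_nonneg (gg_nonneg x), gg]
    rw [show (2 : ℝ) / ksq k = (ksq k / 2)⁻¹ by rw [inv_div]]
    exact inv_anti₀ (by linarith) h2

/-- integral of `gg` over the unit square at `k`. -/
def Ik (k : ℤ × ℤ) : ℝ := ∫ x in Q k, gg x

lemma Ik_close {k : ℤ × ℤ} (hk : 36 ≤ ksq k) :
    |Ik k - (ksq k)⁻¹| ≤ 6 / (ksq k * Real.sqrt (ksq k)) := by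
  have hs := sqrt_ksq_ge hk
  have hsq := sq_sqrt_ksq k
  have hqpos : (0:ℝ) < ksq k := by linarith
  have hIeq : Ik k - (ksq k)⁻¹ = ∫ x in Q k, (gg x - (ksq k)⁻¹) := by
    rw [integral_sub (integrableOn_gg_Q hk)
      (integrableOn_const (by rw [volume_Q]; exact ENNReal.one_ne_top))]
    rw [setIntegral_const, Ik]
    rw [measureReal_def, volume_Q]
    simp
  rw [hIeq, ← Real.norm_eq_abs]
  have key : ∀ x ∈ Q k, ‖gg x - (ksq k)⁻¹‖ ≤ 6 / (ksq k * Real.sqrt (ksq k)) := by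
    intro x hx
    have h2 := nsq_lower hk hx
    have hxpos : 0 < nsq x := by linarith
    have habs := abs_nsq_sub k hx
    have e : gg x - (ksq k)⁻¹ = (ksq k - nsq x) / (nsq x * ksq k) := by
      rw [gg]; field_simp
    rw [Real.norm_eq_abs, e, abs_div, abs_of_pos (by positivity : (0:ℝ) < nsq x * ksq k)]
    have h3 : |ksq k - nsq x| ≤ 3 * Real.sqrt (ksq k) := by
      rw [abs_sub_comm]; linarith
    have h4 : ksq k / 2 * ksq k ≤ nsq x * ksq k :=
      mul_le_mul_of_nonneg_right h2 (le_of_lt hqpos)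
    calc |ksq k - nsq x| / (nsq x * ksq k)
        ≤ 3 * Real.sqrt (ksq k) / (ksq k / 2 * ksq k) := by
          apply div_le_div₀ (by positivity) h3 (by positivity) h4
      _ = 6 / (ksq k * Real.sqrt (ksq k)) := by
          rw [div_eq_div_iff (by positivity) (by positivity)]
          nlinarith
  have := norm_setIntegral_le_of_norm_le_const
    (by rw [volume_Q]; exact ENNReal.one_lt_top) key
  rw [measureReal_def, volume_Q] at this
  simpa using this

/-- summable majorant of the per-square errors -/
def EE (k : ℤ × ℤ) : ℝ := if ksq k = 0 then 0 else 6 / (ksq k * Real.sqrt (ksq k))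

lemma EE_nonneg (k : ℤ × ℤ) : 0 ≤ EE k := by
  unfold EE; split
  · exact le_refl 0
  · exact div_nonneg (by norm_num) (mul_nonneg (ksq_nonneg k) (Real.sqrt_nonneg _))

lemma EE_eq {k : ℤ × ℤ} (hk : ksq k ≠ 0) : EE k = 6 / (ksq k * Real.sqrt (ksq k)) :=
  if_neg hk

lemma summable_EE : Summable EE := by
  have h := EisensteinSeries.summable_one_div_norm_rpow (k := 3) (by norm_num)
  have h2 : Summable (fun k : ℤ × ℤ => ‖(finTwoArrowEquiv ℤ).symm k‖ ^ (-(3:ℝ))) :=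
    (finTwoArrowEquiv ℤ).symm.summable_iff.2 h
  apply Summable.of_nonneg_of_le EE_nonneg _ (h2.mul_left 6)
  intro k
  have hnorm : ‖(finTwoArrowEquiv ℤ).symm k‖
      = ((max (k.1.natAbs) (k.2.natAbs) : ℕ) : ℝ) := by
    rw [EisensteinSeries.norm_eq_max_natAbs]
    simp [finTwoArrowEquiv]
  by_cases hk : ksq k = 0
  · rw [EE, if_pos hk]
    positivity
  · rw [EE_eq hk]
    have hq : 0 < ksq k := lt_of_le_of_ne (ksq_nonneg k) (Ne.symm hk)
    set m : ℝ := ((max (k.1.natAbs) (k.2.natAbs) : ℕ) : ℝ) with hm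
    have hm0 : 0 ≤ m := Nat.cast_nonneg _
    have hm1 : 1 ≤ m := by
      have : k ≠ (0, 0) := by
        rintro rfl; simp [ksq] at hk
      have : 1 ≤ max (k.1.natAbs) (k.2.natAbs) := by
        rcases Nat.eq_zero_or_pos (max (k.1.natAbs) (k.2.natAbs)) with h0 | h1
        · exfalso
          apply this
          have := Nat.max_eq_zero_iff.1 h0
          have e1 : k.1 = 0 := Int.natAbs_eq_zero.1 this.1
          have e2 : k.2 = 0 := Int.natAbs_eq_zero.1 this.2
          exact Prod.ext e1 e2
        · exact h1
      rw [hm]; exact_mod_cast this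
    have hmsq : m ^ 2 ≤ ksq k := by
      rw [ksq]
      rcases max_cases (k.1.natAbs) (k.2.natAbs) with ⟨he, _⟩ | ⟨he, _⟩ <;>
        rw [hm, he]
      · rw [show ((k.1.natAbs : ℕ) : ℝ) = |(k.1 : ℝ)| by
          rw [Nat.cast_natAbs]; push_cast; rfl]
        rw [sq_abs]; nlinarith [sq_nonneg ((k.2 : ℝ))]
      · rw [show ((k.2.natAbs : ℕ) : ℝ) = |(k.2 : ℝ)| by
          rw [Nat.cast_natAbs]; push_cast; rfl]
        rw [sq_abs]; nlinarith [sq_nonneg ((k.1 : ℝ))]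
    have hmsqrt : m ≤ Real.sqrt (ksq k) := by
      rw [show m = Real.sqrt (m ^ 2) by rw [Real.sqrt_sq hm0]]
      exact Real.sqrt_le_sqrt hmsq
    have hbound : 6 / (ksq k * Real.sqrt (ksq k)) ≤ 6 / (m ^ 2 * m) := by
      apply div_le_div_of_nonneg_left (by norm_num) (by positivity)
      exact mul_le_mul hmsq hmsqrt hm0 (le_of_lt hq)
    refine hbound.trans (le_of_eq ?_)
    have hmne : m ≠ 0 := by linarith
    rw [hnorm, Real.rpow_neg hm0, show ((3:ℝ) = ((3:ℕ) : ℝ)) by norm_num,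
      Real.rpow_natCast]
    field_simp
/-- open-closed annulus `a < |x| ≤ b`, in squared form. -/
def Ann (a b : ℝ) : Set (ℝ × ℝ) := {x | a ^ 2 < nsq x ∧ nsq x ≤ b ^ 2}

lemma measurableSet_Ann (a b : ℝ) : MeasurableSet (Ann a b) := by
  apply MeasurableSet.inter
  · exact measurableSet_lt measurable_const continuous_nsq.measurable
  · exact measurableSet_le continuous_nsq.measurable measurable_const

lemma Ann_subset_box (a b : ℝ) : Ann a b ⊆ Icc (-|b|) |b| ×ˢ Icc (-|b|) |b| := by
  rintro x ⟨_, h2⟩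
  have h2' : x.1 ^ 2 + x.2 ^ 2 ≤ b ^ 2 := h2
  have e1 : x.1 ^ 2 ≤ |b| ^ 2 := by rw [sq_abs]; nlinarith [sq_nonneg x.2]
  have e2 : x.2 ^ 2 ≤ |b| ^ 2 := by rw [sq_abs]; nlinarith [sq_nonneg x.1]
  have hb : 0 ≤ |b| := abs_nonneg b
  constructor
  · constructor <;> nlinarith
  · constructor <;> nlinarith

lemma volume_Ann_lt_top (a b : ℝ) : volume (Ann a b) < ⊤ := by
  apply lt_of_le_of_lt (measure_mono (Ann_subset_box a b))
  rw [Measure.volume_eq_prod, Measure.prod_prod]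
  exact ENNReal.mul_lt_top measure_Icc_lt_top measure_Icc_lt_top

lemma integrableOn_gg_Ann {a : ℝ} (ha : 0 < a) (b : ℝ) : IntegrableOn gg (Ann a b) := by
  refine Measure.integrableOn_of_bounded (M := (a ^ 2)⁻¹) (volume_Ann_lt_top a b).ne
    measurable_gg.aestronglyMeasurable ?_
  · filter_upwards [ae_restrict_mem (measurableSet_Ann a b)] with x hx
    rw [Real.norm_eq_abs, abs_of_nonneg (gg_nonneg x), gg]
    exact inv_anti₀ (by positivity) (le_of_lt hx.1)

lemma integral_gg_Ann {a b : ℝ} (ha : 0 < a) (hab : a ≤ b) :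
    ∫ x in Ann a b, gg x = 2 * π * (Real.log b - Real.log a) := by
  have hb : 0 < b := lt_of_lt_of_le ha hab
  rw [← integral_indicator (measurableSet_Ann a b), ← integral_comp_polarCoord_symm]
  have hcong : ∀ p ∈ polarCoord.target,
      p.1 • (Ann a b).indicator gg (polarCoord.symm p)
        = (Ioc a b).indicator (fun r => r⁻¹) p.1 * (1 : ℝ) := by
    rintro ⟨r, θ⟩ hp
    have hr : 0 < r := hp.1
    have hnsq : nsq (polarCoord.symm (r, θ)) = r ^ 2 := by
      simp only [polarCoord_symm_apply, nsq]
      linear_combination r ^ 2 * (sin_sq_add_cos_sq θ)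
    by_cases hmem : r ∈ Ioc a b
    · have : polarCoord.symm (r, θ) ∈ Ann a b := by
        simp only [Ann, mem_setOf_eq, hnsq]
        constructor
        · nlinarith [hmem.1]
        · nlinarith [hmem.2]
      rw [indicator_of_mem this, indicator_of_mem hmem, gg, hnsq]
      simp only [smul_eq_mul, mul_one]
      field_simp
    · have : polarCoord.symm (r, θ) ∉ Ann a b := by
        intro hc
        apply hmem
        simp only [Ann, mem_setOf_eq, hnsq] at hc
        constructor
        · nlinarith [hc.1]
        · nlinarith [hc.2]
      rw [indicator_of_notMem this, indicator_of_notMem hmem]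
      simp
  rw [setIntegral_congr_fun polarCoord.open_target.measurableSet hcong]
  rw [polarCoord_target, Measure.volume_eq_prod, ← Measure.prod_restrict,
    integral_prod_mul (f := fun r => (Ioc a b).indicator (fun r => r⁻¹) r)
      (g := fun _ => (1:ℝ))]
  have h1 : ∫ r in Ioi (0:ℝ), (Ioc a b).indicator (fun r => r⁻¹) r
      = Real.log b - Real.log a := by
    rw [setIntegral_indicator measurableSet_Ioc]
    have : Ioi (0:ℝ) ∩ Ioc a b = Ioc a b :=
      inter_eq_self_of_subset_right (fun x hx => lt_trans ha hx.1)
    rw [this, ← intervalIntegral.integral_of_le hab,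
      integral_inv (by
        rw [Set.uIcc_of_le hab]
        intro hc
        exact absurd hc.1 (not_le.2 ha)),
      Real.log_div (ne_of_gt hb) (ne_of_gt ha)]
  have h2 : ∫ _ in Ioo (-π) π, (1 : ℝ) = 2 * π := by
    rw [setIntegral_const, smul_eq_mul, mul_one,
      Real.volume_real_Ioo_of_le (by linarith [pi_pos] : -π ≤ π)]
    ring
  rw [h1, h2]
  ring
lemma finite_K (N : ℝ) : {k : ℤ × ℤ | 0 < ksq k ∧ ksq k ≤ N ^ 2}.Finite := by
  apply Set.Finite.subset (Set.finite_Icc ((-⌈|N|⌉, -⌈|N|⌉) : ℤ × ℤ) (⌈|N|⌉, ⌈|N|⌉))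
  rintro k ⟨hk0, hk1⟩
  have hk1' : (k.1 : ℝ) ^ 2 + (k.2 : ℝ) ^ 2 ≤ N ^ 2 := hk1
  have e1 : |(k.1 : ℝ)| ≤ |N| := by
    rw [← Real.sqrt_sq_eq_abs, ← Real.sqrt_sq_eq_abs (x := N)]
    exact Real.sqrt_le_sqrt (by nlinarith [sq_nonneg (k.2 : ℝ)])
  have e2 : |(k.2 : ℝ)| ≤ |N| := by
    rw [← Real.sqrt_sq_eq_abs, ← Real.sqrt_sq_eq_abs (x := N)]
    exact Real.sqrt_le_sqrt (by nlinarith [sq_nonneg (k.1 : ℝ)])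
  have hceil : |N| ≤ (⌈|N|⌉ : ℝ) := Int.le_ceil _
  have e1' := abs_le.1 e1
  have e2' := abs_le.1 e2
  simp only [Set.mem_Icc, Prod.le_def]
  refine ⟨⟨?_, ?_⟩, ?_, ?_⟩ <;> [skip; skip; skip; skip] <;>
    · first
      | exact_mod_cast (by push_cast; linarith : ((-⌈|N|⌉ : ℤ) : ℝ) ≤ (k.1 : ℝ))
      | exact_mod_cast (by push_cast; linarith : ((-⌈|N|⌉ : ℤ) : ℝ) ≤ (k.2 : ℝ))
      | exact_mod_cast (by push_cast; linarith : (k.1 : ℝ) ≤ ((⌈|N|⌉ : ℤ) : ℝ))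
      | exact_mod_cast (by push_cast; linarith : (k.2 : ℝ) ≤ ((⌈|N|⌉ : ℤ) : ℝ))

lemma S_eq (N : ℝ) :
    (∑' k : ℤ × ℤ, if 0 < ksq k ∧ ksq k ≤ N ^ 2 then (ksq k)⁻¹ else 0)
      = ∑ k ∈ (finite_K N).toFinset, (ksq k)⁻¹ := by
  rw [tsum_eq_sum (s := (finite_K N).toFinset) (f := fun k =>
      if 0 < ksq k ∧ ksq k ≤ N ^ 2 then (ksq k)⁻¹ else 0)
    (fun k hk => if_neg (fun hc => hk ((finite_K N).mem_toFinset.2 hc)))]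
  exact Finset.sum_congr rfl fun k hk => if_pos ((finite_K N).mem_toFinset.1 hk)

/-- tail error sum -/
def T (N : ℝ) : ℝ := ∑' k : ℤ × ℤ, if N ^ 2 < ksq k then EE k else 0

lemma ite_nonneg (N : ℝ) (k : ℤ × ℤ) : 0 ≤ (if N ^ 2 < ksq k then EE k else 0) := by
  by_cases h : N ^ 2 < ksq k
  · rw [if_pos h]; exact EE_nonneg k
  · rw [if_neg h]

lemma ite_le (N : ℝ) (k : ℤ × ℤ) : (if N ^ 2 < ksq k then EE k else 0) ≤ EE k := by
  by_cases h : N ^ 2 < ksq k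
  · rw [if_pos h]
  · rw [if_neg h]; exact EE_nonneg k

lemma summable_ite_T (N : ℝ) :
    Summable (fun k : ℤ × ℤ => if N ^ 2 < ksq k then EE k else 0) :=
  Summable.of_nonneg_of_le (ite_nonneg N) (ite_le N) summable_EE

lemma T_nonneg (N : ℝ) : 0 ≤ T N := tsum_nonneg (ite_nonneg N)

lemma T_tendsto : Tendsto T atTop (𝓝 0) := by
  rw [Metric.tendsto_atTop]
  intro ε hε
  obtain ⟨s, hs⟩ := ((tendsto_order.1 (tendsto_tsum_compl_atTop_zero EE)).2 ε hε).exists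
  set C := ∑ k ∈ s, ksq k with hC
  have hC0 : 0 ≤ C := Finset.sum_nonneg fun k _ => ksq_nonneg k
  refine ⟨Real.sqrt C, fun N hN => ?_⟩
  have hN0 : 0 ≤ N := le_trans (Real.sqrt_nonneg C) hN
  have hCN : C ≤ N ^ 2 := by
    rw [← Real.sq_sqrt hC0]
    exact pow_le_pow_left₀ (Real.sqrt_nonneg C) hN 2
  have hsupp : Function.support (fun k : ℤ × ℤ => if N ^ 2 < ksq k then EE k else 0)
      ⊆ {k : ℤ × ℤ | k ∉ s} := by
    intro k hk
    simp only [Function.mem_support] at hk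
    intro hks
    apply hk
    rw [if_neg]
    rw [not_lt]
    calc ksq k ≤ C := Finset.single_le_sum (fun j _ => ksq_nonneg j) hks
      _ ≤ N ^ 2 := hCN
  have heq : T N
      = ∑' k : {k : ℤ × ℤ // k ∉ s}, (if N ^ 2 < ksq (k : ℤ × ℤ) then EE k else 0) :=
    (tsum_subtype_eq_of_support_subset hsupp).symm
  rw [Real.dist_eq, sub_zero, abs_of_nonneg (T_nonneg N), heq]
  calc (∑' k : {k : ℤ × ℤ // k ∉ s}, if N ^ 2 < ksq (k : ℤ × ℤ) then EE k else 0)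
      ≤ ∑' k : {k : ℤ × ℤ // k ∉ s}, EE k := by
        apply Summable.tsum_le_tsum _ ((summable_ite_T N).subtype _) (summable_EE.subtype _)
        intro k
        exact ite_le N (k : ℤ × ℤ)
    _ < ε := hs

lemma L_tendsto :
    Tendsto (fun x : ℝ => Real.log (x + 2) - Real.log (x - 2)) atTop (𝓝 0) := by
  have h1 : Tendsto (fun x : ℝ => (x + 2) / (x - 2)) atTop (𝓝 1) := by
    have hev : (fun x : ℝ => (x + 2) / (x - 2)) =ᶠ[atTop] fun x => 1 + 4 / (x - 2) := by
      filter_upwards [eventually_gt_atTop 2] with x hx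
      have hne : x - 2 ≠ 0 := by linarith
      field_simp
      ring
    rw [tendsto_congr' hev]
    have h4 : Tendsto (fun x : ℝ => 4 / (x - 2)) atTop (𝓝 0) :=
      Tendsto.div_atTop tendsto_const_nhds
        (tendsto_atTop_add_const_right _ (-2) tendsto_id)
    simpa using tendsto_const_nhds.add h4
  have h2 : Tendsto (fun x : ℝ => Real.log ((x + 2) / (x - 2))) atTop (𝓝 0) := by
    have := (Real.continuousAt_log one_ne_zero).tendsto.comp h1
    simpa [Function.comp_def] using this
  apply Tendsto.congr' _ h2
  filter_upwards [eventually_gt_atTop 2] with x hx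
  rw [Real.log_div (by linarith) (by linarith)]

lemma setIntegral_gg_union_le {s t : Set (ℝ × ℝ)} (hs : MeasurableSet s)
    (ht : MeasurableSet t) (hI : IntegrableOn gg (s ∪ t)) :
    ∫ x in s ∪ t, gg x ≤ (∫ x in s, gg x) + ∫ x in t, gg x := by
  have hIs : IntegrableOn gg s := hI.mono_set subset_union_left
  have hIts : IntegrableOn gg (t \ s) :=
    hI.mono_set ((diff_subset).trans subset_union_right)
  have hIt : IntegrableOn gg t := hI.mono_set subset_union_right
  rw [← Set.union_diff_self,
    setIntegral_union disjoint_sdiff_self_right (ht.diff hs) hIs hIts]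
  have : ∫ x in t \ s, gg x ≤ ∫ x in t, gg x :=
    setIntegral_mono_set hIt (ae_of_all _ gg_nonneg)
      (HasSubset.Subset.eventuallyLE diff_subset)
  linarith

/-- The bound function. -/
def BB (x : ℝ) : ℝ := T x + 2 * π * (Real.log (x + 2) - Real.log (x - 2))

lemma BB_tendsto : Tendsto BB atTop (𝓝 0) := by
  have h2 := T_tendsto.add (L_tendsto.const_mul (2 * π))
  rw [show (0:ℝ) + 2 * π * 0 = 0 by ring] at h2
  exact h2

set_option maxHeartbeats 2000000 in
lemma key {N M : ℝ} (hN : 6 ≤ N) (hNM : N ≤ M) :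
    |((∑ k ∈ (finite_K M).toFinset, (ksq k)⁻¹) - 2 * π * Real.log M)
      - ((∑ k ∈ (finite_K N).toFinset, (ksq k)⁻¹) - 2 * π * Real.log N)|
      ≤ BB N + BB M := by
  have hM : (6:ℝ) ≤ M := le_trans hN hNM
  have hN0 : (0:ℝ) < N := by linarith
  have hsub : (finite_K N).toFinset ⊆ (finite_K M).toFinset := by
    rw [Set.Finite.toFinset_subset_toFinset]
    rintro k ⟨h1, h2⟩
    exact ⟨h1, h2.trans (by nlinarith)⟩
  set D := (finite_K M).toFinset \ (finite_K N).toFinset with hDdef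
  have hD : ∀ k ∈ D, N ^ 2 < ksq k ∧ ksq k ≤ M ^ 2 := by
    intro k hk
    rw [hDdef, Finset.mem_sdiff] at hk
    obtain ⟨hkM, hkN⟩ := hk
    have hkM' := (finite_K M).mem_toFinset.1 hkM
    have hkN' : ¬(0 < ksq k ∧ ksq k ≤ N ^ 2) :=
      fun hc => hkN ((finite_K N).mem_toFinset.2 hc)
    push_neg at hkN'
    exact ⟨hkN' hkM'.1, hkM'.2⟩
  have hD36 : ∀ k ∈ D, 36 ≤ ksq k := by
    intro k hk
    nlinarith [(hD k hk).1]
  have hsum : (∑ k ∈ (finite_K M).toFinset, (ksq k)⁻¹)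
      - ∑ k ∈ (finite_K N).toFinset, (ksq k)⁻¹ = ∑ k ∈ D, (ksq k)⁻¹ :=
    (Finset.sum_sdiff_eq_sub hsub).symm
  -- error-sum bound
  have hA : |∑ k ∈ D, ((ksq k)⁻¹ - Ik k)| ≤ T N := by
    calc |∑ k ∈ D, ((ksq k)⁻¹ - Ik k)| ≤ ∑ k ∈ D, |(ksq k)⁻¹ - Ik k| :=
          Finset.abs_sum_le_sum_abs _ _
      _ ≤ ∑ k ∈ D, EE k := by
          apply Finset.sum_le_sum
          intro k hk
          rw [abs_sub_comm, EE_eq (by intro hc; nlinarith [hD36 k hk] : ksq k ≠ 0)]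
          exact Ik_close (hD36 k hk)
      _ = ∑ k ∈ D, (if N ^ 2 < ksq k then EE k else 0) :=
          Finset.sum_congr rfl fun k hk => (if_pos (hD k hk).1).symm
      _ ≤ T N := Summable.sum_le_tsum D (fun k _ => ite_nonneg N k) (summable_ite_T N)
  -- the union of squares
  set U := ⋃ k ∈ D, Q k with hUdef
  have hUmeas : MeasurableSet U :=
    D.measurableSet_biUnion fun k _ => measurableSet_Q k
  have hIU : ∑ k ∈ D, Ik k = ∫ x in U, gg x := by
    rw [hUdef, integral_biUnion_finset D (fun k _ => measurableSet_Q k)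
      (fun k _ l _ hkl => Q_disjoint hkl) (fun k hk => integrableOn_gg_Q (hD36 k hk))]
    rfl
  -- geometric facts
  have hsq_facts : ∀ k ∈ D, ∀ x ∈ Q k,
      ksq k - (2 * Real.sqrt (ksq k) + 1/2) ≤ nsq x
        ∧ nsq x ≤ ksq k + (2 * Real.sqrt (ksq k) + 1/2) := by
    intro k hk x hx
    have h := abs_le.1 (abs_nsq_sub k hx)
    constructor <;> linarith [h.1, h.2]
  have hUsub : U ⊆ Ann (N - 2) (M + 2) := by
    intro x hx
    rw [hUdef, Set.mem_iUnion₂] at hx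
    obtain ⟨k, hk, hxQ⟩ := hx
    obtain ⟨hlow, hhigh⟩ := hsq_facts k hk x hxQ
    have hsq := sq_sqrt_ksq k
    set s := Real.sqrt (ksq k) with hsdef
    have hsN : N < s := by
      nlinarith [(hD k hk).1, Real.sqrt_nonneg (ksq k)]
    have hsM : s ≤ M := by
      nlinarith [(hD k hk).2, Real.sqrt_nonneg (ksq k)]
    constructor
    · nlinarith [mul_nonneg (le_of_lt (sub_pos.2 hsN)) (by linarith : (0:ℝ) ≤ s + N - 2)]
    · nlinarith
  have lower_strip : ∀ k ∈ D, ∀ x ∈ Q k, (N - 2) ^ 2 < nsq x := fun k hk x hx =>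
    (hUsub (by rw [hUdef, Set.mem_iUnion₂]; exact ⟨k, hk, hx⟩)).1
  have hdiff1 : U \ Ann N M ⊆ Ann (N - 2) (N + 2) ∪ Ann (M - 2) (M + 2) := by
    rintro x ⟨hxU, hxn⟩
    have hxU' := hxU
    rw [hUdef, Set.mem_iUnion₂] at hxU'
    obtain ⟨k, hk, hxQ⟩ := hxU'
    obtain ⟨hlow, hhigh⟩ := hsq_facts k hk x hxQ
    have hsq := sq_sqrt_ksq k
    set s := Real.sqrt (ksq k) with hsdef
    have hsM : s ≤ M := by
      nlinarith [(hD k hk).2, Real.sqrt_nonneg (ksq k)]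
    have hxn' : ¬(N ^ 2 < nsq x ∧ nsq x ≤ M ^ 2) := hxn
    push_neg at hxn'
    by_cases hcase : N ^ 2 < nsq x
    · right
      have hMlt : M ^ 2 < nsq x := hxn' hcase
      exact ⟨by nlinarith, by nlinarith⟩
    · left
      push_neg at hcase
      refine ⟨?_, by nlinarith⟩
      exact lower_strip k hk x hxQ
  have hdiff2 : Ann N M \ U ⊆ Ann (N - 2) (N + 2) ∪ Ann (M - 2) (M + 2) := by
    rintro x ⟨⟨hx1, hx2⟩, hxU⟩
    obtain ⟨k, hxQ⟩ := exists_mem_Q x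
    have hknotD : k ∉ D := by
      intro hc
      exact hxU (by rw [hUdef, Set.mem_iUnion₂]; exact ⟨k, hc, hxQ⟩)
    have habs := abs_le.1 (abs_nsq_sub k hxQ)
    have hsq := sq_sqrt_ksq k
    set s := Real.sqrt (ksq k) with hsdef
    have hs0 : 0 ≤ s := Real.sqrt_nonneg _
    by_cases hq : ksq k ≤ N ^ 2
    · left
      have hsN : s ≤ N := by nlinarith
      exact ⟨by nlinarith, by nlinarith⟩
    · push_neg at hq
      by_cases hq2 : ksq k ≤ M ^ 2
      · exfalso
        apply hknotD
        rw [hDdef, Finset.mem_sdiff]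
        constructor
        · exact (finite_K M).mem_toFinset.2 ⟨by nlinarith, hq2⟩
        · intro hc
          exact absurd ((finite_K N).mem_toFinset.1 hc).2 (not_le.2 hq)
      · right
        push_neg at hq2
        have hsM : M < s := by nlinarith
        refine ⟨?_, by nlinarith⟩
        nlinarith [mul_nonneg (le_of_lt (sub_pos.2 hsM)) (by linarith : (0:ℝ) ≤ s + M - 2)]
  -- integrability
  have hIntBig : IntegrableOn gg (Ann (N - 2) (M + 2)) :=
    integrableOn_gg_Ann (by linarith) _
  have hIntU : IntegrableOn gg U := hIntBig.mono_set hUsub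
  have hIntAnn : IntegrableOn gg (Ann N M) := integrableOn_gg_Ann hN0 M
  have hIntS1 : IntegrableOn gg (Ann (N - 2) (N + 2)) :=
    integrableOn_gg_Ann (by linarith) _
  have hIntS2 : IntegrableOn gg (Ann (M - 2) (M + 2)) :=
    integrableOn_gg_Ann (by linarith) _
  have hIntS12 : IntegrableOn gg (Ann (N - 2) (N + 2) ∪ Ann (M - 2) (M + 2)) :=
    hIntS1.union hIntS2
  have hSmeas : MeasurableSet (Ann (N - 2) (N + 2) ∪ Ann (M - 2) (M + 2)) :=
    (measurableSet_Ann _ _).union (measurableSet_Ann _ _)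
  -- strip integrals
  have hstrip1 : ∫ x in Ann (N - 2) (N + 2), gg x
      = 2 * π * (Real.log (N + 2) - Real.log (N - 2)) :=
    integral_gg_Ann (by linarith) (by linarith)
  have hstrip2 : ∫ x in Ann (M - 2) (M + 2), gg x
      = 2 * π * (Real.log (M + 2) - Real.log (M - 2)) :=
    integral_gg_Ann (by linarith) (by linarith)
  -- split the integrals
  have hsplitU : ∫ x in U, gg x
      = (∫ x in U ∩ Ann N M, gg x) + ∫ x in U \ Ann N M, gg x := by
    rw [← setIntegral_union (Set.disjoint_left.2 fun x hx1 hx2 => hx2.2 hx1.2)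
      (hUmeas.diff (measurableSet_Ann N M))
      (hIntU.mono_set inter_subset_left) (hIntU.mono_set diff_subset),
      Set.inter_union_diff]
  have hsplitA : ∫ x in Ann N M, gg x
      = (∫ x in U ∩ Ann N M, gg x) + ∫ x in Ann N M \ U, gg x := by
    rw [Set.inter_comm]
    rw [← setIntegral_union (Set.disjoint_left.2 fun x hx1 hx2 => hx2.2 hx1.2)
      ((measurableSet_Ann N M).diff hUmeas)
      (hIntAnn.mono_set inter_subset_left) (hIntAnn.mono_set diff_subset),
      Set.inter_union_diff]
  have hbd1 : ∫ x in U \ Ann N M, gg x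
      ≤ (∫ x in Ann (N - 2) (N + 2), gg x) + ∫ x in Ann (M - 2) (M + 2), gg x := by
    refine le_trans (setIntegral_mono_set hIntS12 (ae_of_all _ gg_nonneg)
      (HasSubset.Subset.eventuallyLE hdiff1)) ?_
    exact setIntegral_gg_union_le (measurableSet_Ann _ _) (measurableSet_Ann _ _) hIntS12
  have hbd2 : ∫ x in Ann N M \ U, gg x
      ≤ (∫ x in Ann (N - 2) (N + 2), gg x) + ∫ x in Ann (M - 2) (M + 2), gg x := by
    refine le_trans (setIntegral_mono_set hIntS12 (ae_of_all _ gg_nonneg)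
      (HasSubset.Subset.eventuallyLE hdiff2)) ?_
    exact setIntegral_gg_union_le (measurableSet_Ann _ _) (measurableSet_Ann _ _) hIntS12
  have hpos1 : 0 ≤ ∫ x in U \ Ann N M, gg x :=
    setIntegral_nonneg (hUmeas.diff (measurableSet_Ann N M)) fun x _ => gg_nonneg x
  have hpos2 : 0 ≤ ∫ x in Ann N M \ U, gg x :=
    setIntegral_nonneg ((measurableSet_Ann N M).diff hUmeas) fun x _ => gg_nonneg x
  have hB : |(∫ x in U, gg x) - ∫ x in Ann N M, gg x|
      ≤ 2 * π * (Real.log (N + 2) - Real.log (N - 2))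
        + 2 * π * (Real.log (M + 2) - Real.log (M - 2)) := by
    rw [hsplitU, hsplitA]
    rw [abs_le]
    constructor <;> [linarith [hbd2, hpos1]; linarith [hbd1, hpos2]]
  -- put everything together
  have hannNM : 2 * π * Real.log M - 2 * π * Real.log N = ∫ x in Ann N M, gg x := by
    rw [integral_gg_Ann hN0 hNM]; ring
  have hdec : ((∑ k ∈ (finite_K M).toFinset, (ksq k)⁻¹) - 2 * π * Real.log M)
      - ((∑ k ∈ (finite_K N).toFinset, (ksq k)⁻¹) - 2 * π * Real.log N)
      = (∑ k ∈ D, ((ksq k)⁻¹ - Ik k)) + ((∫ x in U, gg x) - ∫ x in Ann N M, gg x) := by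
    rw [Finset.sum_sub_distrib, hIU]
    have := hsum
    have := hannNM
    linarith
  rw [hdec]
  calc |(∑ k ∈ D, ((ksq k)⁻¹ - Ik k)) + ((∫ x in U, gg x) - ∫ x in Ann N M, gg x)|
      ≤ |∑ k ∈ D, ((ksq k)⁻¹ - Ik k)| + |(∫ x in U, gg x) - ∫ x in Ann N M, gg x| :=
        abs_add_le _ _
    _ ≤ T N + (2 * π * (Real.log (N + 2) - Real.log (N - 2))
        + 2 * π * (Real.log (M + 2) - Real.log (M - 2))) := by linarith
    _ ≤ BB N + BB M := by
        have hTM := T_nonneg M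
        simp only [BB]
        linarith

end TwoD

/-- The 2D analogue of the Euler–Mascheroni constant exists:
`β = lim_{N→∞} (Σ'_{0<|k|≤N} 1/|k|² − 2π log N)` is a finite limit. -/
theorem twoDim_euler_constant_exists :
    ∃ β : ℝ, Tendsto
      (fun N : ℝ =>
        (∑' k : ℤ × ℤ, if 0 < ksq k ∧ ksq k ≤ N ^ 2 then (ksq k)⁻¹ else 0)
          - 2 * π * Real.log N)
      atTop (𝓝 β) := by
  set f : ℝ → ℝ := fun N =>
    (∑' k : ℤ × ℤ, if 0 < ksq k ∧ ksq k ≤ N ^ 2 then (ksq k)⁻¹ else 0)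
      - 2 * π * Real.log N with hf
  have hkey : ∀ {u v : ℝ}, 6 ≤ u → u ≤ v → |f v - f u| ≤ TwoD.BB u + TwoD.BB v := by
    intro u v hu huv
    rw [hf]
    simp only [TwoD.S_eq]
    exact TwoD.key hu huv
  apply cauchy_map_iff_exists_tendsto.mp
  rw [Metric.cauchy_iff]
  refine ⟨Filter.map_neBot, fun ε hε => ?_⟩
  obtain ⟨a, ha⟩ := Metric.tendsto_atTop.1 TwoD.BB_tendsto (ε / 2) (by linarith)
  set a' := max a 6 with ha'
  refine ⟨f '' Ici a', image_mem_map (Ici_mem_atTop a'), ?_⟩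
  rintro x ⟨u, hu, rfl⟩ y ⟨v, hv, rfl⟩
  have hu6 : (6:ℝ) ≤ u := le_trans (le_max_right a 6) hu
  have hv6 : (6:ℝ) ≤ v := le_trans (le_max_right a 6) hv
  have hBu : TwoD.BB u < ε / 2 := by
    have := ha u (le_trans (le_max_left a 6) hu)
    rw [Real.dist_eq, sub_zero] at this
    exact lt_of_le_of_lt (le_abs_self _) this
  have hBv : TwoD.BB v < ε / 2 := by
    have := ha v (le_trans (le_max_left a 6) hv)
    rw [Real.dist_eq, sub_zero] at this
    exact lt_of_le_of_lt (le_abs_self _) this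
  rw [Real.dist_eq]
  rcases le_total u v with h | h
  · calc |f u - f v| = |f v - f u| := abs_sub_comm _ _
      _ ≤ TwoD.BB u + TwoD.BB v := hkey hu6 h
      _ < ε := by linarith
  · calc |f u - f v| ≤ TwoD.BB v + TwoD.BB u := hkey hv6 h
      _ < ε := by linarith

end
end
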